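/- arXiv:1712.08767 — 10 statements merged into one kernel-verified Lean document; each statement's English description precedes it below -/
import Mathlib

section
/- Let X be the a×a lower bidiagonal matrix over ℤ with 1's on the diagonal and subdiagonal, b < a, and let X̂ be the r×r submatrix of X^b formed from rows i_1 < ⋯ < i_r and columns j_1 < ⋯ < j_r. Then det(X̂) ≥ 0. -/
open Matrix

/-- The `a × a` lower bidiagonal matrix over `ℤ` with 1's on the main diagonal
and on the first subdiagonal. -/
def Xmat (a : ℕ) : Matrix (Fin a) (Fin a) ℤ :=
  fun i j => if (i : ℕ) = (j : ℕ) ∨ (i : ℕ) = (j : ℕ) + 1 then 1 else 0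

/-- The set of row indices where column `j` of `Xmat a` is nonzero. -/
def Scol (a : ℕ) (j : Fin a) : Finset (Fin a) :=
  Finset.univ.filter fun m => (m : ℕ) = (j : ℕ) ∨ (m : ℕ) = (j : ℕ) + 1

lemma Xmat_mul_col (a b : ℕ) (i j : Fin a) :
    (Xmat a ^ (b + 1)) i j = ∑ m ∈ Scol a j, (Xmat a ^ b) i m := by
  rw [pow_succ, Matrix.mul_apply, Scol, Finset.sum_filter]
  refine Finset.sum_congr rfl fun m _ => ?_
  by_cases h : (m : ℕ) = (j : ℕ) ∨ (m : ℕ) = (j : ℕ) + 1 <;>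
    simp [Xmat, h]

/-- Total nonnegativity of `Xmat a ^ b`, with monotone (not necessarily strict)
row and column selections. -/
lemma Xmat_pow_tn (a b : ℕ) : ∀ (r : ℕ) (ri rj : Fin r → Fin a),
    Monotone ri → Monotone rj → 0 ≤ ((Xmat a ^ b).submatrix ri rj).det := by
  induction b with
  | zero =>
    intro r ri rj hri hrj
    rw [pow_zero]
    by_cases hii : Function.Injective ri
    · by_cases hjj : Function.Injective rj
      · by_cases hij : ri = rj
        · subst hij
          have h1 : (1 : Matrix (Fin a) (Fin a) ℤ).submatrix ri ri = 1 := by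
            ext k l
            simp [Matrix.one_apply, hii.eq_iff]
          rw [h1, Matrix.det_one]
          exact zero_le_one
        · have hrange := @StrictMono.range_inj (Fin r) (Fin a) _ _ Finite.to_wellFoundedLT _ _
            (hri.strictMono_of_injective hii) (hrj.strictMono_of_injective hjj)
          have hne : Set.range ri ≠ Set.range rj := fun h => hij (hrange.1 h)
          have : ¬ (Set.range ri ⊆ Set.range rj) ∨ ¬ (Set.range rj ⊆ Set.range ri) := by
            by_contra h
            push_neg at h
            exact hne (Set.Subset.antisymm h.1 h.2)
          rcases this with h | h
          · obtain ⟨x, ⟨k, rfl⟩, hx⟩ := Set.not_subset.1 h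
            refine le_of_eq (Matrix.det_eq_zero_of_row_eq_zero k fun l => ?_).symm
            have : ri k ≠ rj l := fun hc => hx ⟨l, hc.symm⟩
            simp [Matrix.one_apply, this]
          · obtain ⟨x, ⟨l, rfl⟩, hx⟩ := Set.not_subset.1 h
            refine le_of_eq (Matrix.det_eq_zero_of_column_eq_zero l fun k => ?_).symm
            have : ri k ≠ rj l := fun hc => hx ⟨k, hc⟩
            simp [Matrix.one_apply, this]
      · obtain ⟨k, l, hkl, hne⟩ := Function.not_injective_iff.1 hjj
        refine le_of_eq (Matrix.det_zero_of_column_eq hne fun i => ?_).symm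
        rw [Matrix.submatrix_apply, Matrix.submatrix_apply, hkl]
    · obtain ⟨k, l, hkl, hne⟩ := Function.not_injective_iff.1 hii
      refine le_of_eq (Matrix.det_zero_of_row_eq hne ?_).symm
      funext m
      rw [Matrix.submatrix_apply, Matrix.submatrix_apply, hkl]
  | succ b ih =>
    intro r ri rj hri hrj
    by_cases hjj : Function.Injective rj
    · have hsj := hrj.strictMono_of_injective hjj
      set A := Xmat a ^ b with hA
      have key : (((Xmat a ^ (b + 1)).submatrix ri rj))ᵀ
          = fun l => ∑ m ∈ Scol a (rj l), (fun k => A (ri k) m) := by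
        funext l k
        simp only [Matrix.transpose_apply, Matrix.submatrix_apply, Xmat_mul_col,
          Finset.sum_apply, hA]
      have expand := (Matrix.detRowAlternating (R := ℤ) (n := Fin r)).toMultilinearMap.map_sum_finset
        (fun l m => (fun k => A (ri k) m)) (fun l => Scol a (rj l))
      have hdet : ((Xmat a ^ (b + 1)).submatrix ri rj).det
          = ∑ σ ∈ Fintype.piFinset (fun l => Scol a (rj l)), (A.submatrix ri σ).det := by
        rw [← Matrix.det_transpose, key]
        show (Matrix.detRowAlternating (R := ℤ) (n := Fin r)).toMultilinearMap
            (fun l => ∑ m ∈ Scol a (rj l), (fun k => A (ri k) m)) = _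
        rw [expand]
        refine Finset.sum_congr rfl fun σ hσ => ?_
        rw [← Matrix.det_transpose (A.submatrix ri σ)]
        rfl
      rw [hdet]
      refine Finset.sum_nonneg fun σ hσ => ?_
      have hmem : ∀ l, (σ l : ℕ) = (rj l : ℕ) ∨ (σ l : ℕ) = (rj l : ℕ) + 1 := by
        intro l
        have := Fintype.mem_piFinset.1 hσ l
        simpa [Scol] using this
      refine ih r ri σ hri fun k l hkl => ?_
      rcases eq_or_lt_of_le hkl with rfl | hlt
      · exact le_rfl
      · have h1 := hmem k
        have h2 := hmem l
        have h3 : (rj k : ℕ) < (rj l : ℕ) := hsj hlt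
        rw [Fin.le_def]
        clear hdet expand key hσ hmem ih
        clear_value A
        omega
    · obtain ⟨k, l, hkl, hne⟩ := Function.not_injective_iff.1 hjj
      refine le_of_eq (Matrix.det_zero_of_column_eq hne fun i => ?_).symm
      rw [Matrix.submatrix_apply, Matrix.submatrix_apply, hkl]

/-- Any minor of `X^b` (for `b < a`), formed from rows `i₁ < ⋯ < i_r` and
columns `j₁ < ⋯ < j_r`, is nonnegative. -/
theorem det_submatrix_Xmat_pow_nonneg (a b r : ℕ) (hb : b < a)
    (ri rj : Fin r → Fin a) (hri : StrictMono ri) (hrj : StrictMono rj) :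
    0 ≤ ((Xmat a ^ b).submatrix ri rj).det := by
  exact Xmat_pow_tn a b r ri rj hri.monotone hrj.monotone
end

section
/- Let X be the a×a lower bidiagonal matrix over ℤ with 1's on the diagonal and subdiagonal, b < a, and let X̂ be the r×r submatrix of X^b formed from rows i_1 < ⋯ < i_r and columns j_1 < ⋯ < j_r. Then det(X̂) > 0 if and only if j_l ∈ {i_l − b, …, i_l} for every l = 1, …, r. -/
section Aux

open Matrix Finset

/-- Row formula for multiplying by `Xmat` on the left. -/
lemma Xmat_mul_apply {a : ℕ} (M : Matrix (Fin a) (Fin a) ℤ) (i j : Fin a) :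
    (Xmat a * M) i j =
      M i j + (if h : 0 < (i : ℕ) then M ⟨(i : ℕ) - 1, by omega⟩ j else 0) := by
  have hi := i.2
  rw [Matrix.mul_apply]
  have hsplit : ∀ k : Fin a, Xmat a i k * M k j =
      (if i = k then M k j else 0) + (if (i : ℕ) = (k : ℕ) + 1 then M k j else 0) := by
    intro k
    simp only [Xmat, Fin.ext_iff]
    by_cases h1 : (i : ℕ) = (k : ℕ) <;> by_cases h2 : (i : ℕ) = (k : ℕ) + 1 <;>
      simp [h1, h2] <;> omega
  rw [Finset.sum_congr rfl fun k _ => hsplit k, Finset.sum_add_distrib]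
  congr 1
  · simp
  · by_cases h : 0 < (i : ℕ)
    · rw [dif_pos h]
      rw [Finset.sum_eq_single_of_mem (⟨(i : ℕ) - 1, by omega⟩ : Fin a)
        (Finset.mem_univ _)
        (fun k _ hk => if_neg (fun hc => hk (Fin.ext (show (k : ℕ) = (i : ℕ) - 1 by omega))))]
      rw [if_pos (show (i : ℕ) = (i : ℕ) - 1 + 1 by omega)]
    · rw [dif_neg h]
      apply Finset.sum_eq_zero
      intro k _
      rw [if_neg]
      omega

lemma Xpow_apply_eq_zero_of_lt {a b : ℕ} : ∀ {i j : Fin a}, (i : ℕ) < (j : ℕ) →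
    (Xmat a ^ b) i j = 0 := by
  induction b with
  | zero =>
    intro i j h
    simp only [pow_zero, Matrix.one_apply]
    rw [if_neg]
    intro he; rw [he] at h; omega
  | succ b ih =>
    intro i j h
    rw [pow_succ', Xmat_mul_apply]
    rw [ih h]
    by_cases hp : 0 < (i : ℕ)
    · rw [dif_pos hp, ih (by simp only; omega)]; ring
    · rw [dif_neg hp]; ring

lemma Xpow_apply_eq_zero_of_gt {a b : ℕ} : ∀ {i j : Fin a}, (j : ℕ) + b < (i : ℕ) →
    (Xmat a ^ b) i j = 0 := by
  induction b with
  | zero =>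
    intro i j h
    simp only [pow_zero, Matrix.one_apply]
    rw [if_neg]
    intro he; rw [he] at h; omega
  | succ b ih =>
    intro i j h
    rw [pow_succ', Xmat_mul_apply]
    rw [ih (by omega)]
    have hp : 0 < (i : ℕ) := by omega
    rw [dif_pos hp, ih (by simp only; omega)]; ring

lemma pigeon1 {r : ℕ} (σ : Equiv.Perm (Fin r)) (l : Fin r) :
    ∃ m, l ≤ m ∧ σ m ≤ l := by
  by_contra h
  push_neg at h
  have hinj : Set.InjOn σ (Finset.Ici l : Finset (Fin r)) := fun x _ y _ hxy =>
    σ.injective hxy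
  have hmap : ∀ x ∈ Finset.Ici l, σ x ∈ Finset.Ioi l := by
    intro x hx
    rw [Finset.mem_Ici] at hx
    rw [Finset.mem_Ioi]
    exact h x hx
  have := Finset.card_le_card_of_injOn σ hmap hinj
  rw [Fin.card_Ici, Fin.card_Ioi] at this
  have hl := l.2
  omega

lemma pigeon2 {r : ℕ} (σ : Equiv.Perm (Fin r)) (l : Fin r) :
    ∃ m, m ≤ l ∧ l ≤ σ m := by
  obtain ⟨m, hm1, hm2⟩ := pigeon1 σ⁻¹ l
  refine ⟨σ⁻¹ m, hm2, ?_⟩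
  simpa using hm1

/-- If the interlacing condition fails somewhere, the minor vanishes. -/
lemma det_submatrix_eq_zero_of_violation {a b r : ℕ} (ri rj : Fin r → Fin a)
    (hri : Monotone ri) (hrj : Monotone rj) (l : Fin r)
    (h : (ri l : ℕ) < (rj l : ℕ) ∨ (rj l : ℕ) + b < (ri l : ℕ)) :
    ((Xmat a ^ b).submatrix ri rj).det = 0 := by
  rw [Matrix.det_apply]
  apply Finset.sum_eq_zero
  intro σ _
  have : ∏ k, ((Xmat a ^ b).submatrix ri rj) (σ k) k = 0 := by
    rcases h with h | h
    · obtain ⟨m, hm1, hm2⟩ := pigeon1 σ l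
      apply Finset.prod_eq_zero (Finset.mem_univ m)
      rw [Matrix.submatrix_apply]
      apply Xpow_apply_eq_zero_of_lt
      have h1 : (ri (σ m) : ℕ) ≤ (ri l : ℕ) := hri hm2
      have h2 : (rj l : ℕ) ≤ (rj m : ℕ) := hrj hm1
      omega
    · obtain ⟨m, hm1, hm2⟩ := pigeon2 σ l
      apply Finset.prod_eq_zero (Finset.mem_univ m)
      rw [Matrix.submatrix_apply]
      apply Xpow_apply_eq_zero_of_gt
      have h1 : (ri l : ℕ) ≤ (ri (σ m) : ℕ) := hri hm2
      have h2 : (rj m : ℕ) ≤ (rj l : ℕ) := hrj hm1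
      omega
  rw [this, smul_zero]

/-- Nonnegativity and positivity of minors of `Xmat a ^ b`, by induction on `b`. -/
lemma det_submatrix_Xpow_nonneg_and_pos (a b : ℕ) :
    ∀ (r : ℕ) (ri rj : Fin r → Fin a), StrictMono ri → StrictMono rj →
      0 ≤ ((Xmat a ^ b).submatrix ri rj).det ∧
      ((∀ l : Fin r, (ri l : ℕ) ≤ (rj l : ℕ) + b ∧ (rj l : ℕ) ≤ (ri l : ℕ)) →
        0 < ((Xmat a ^ b).submatrix ri rj).det) := by
  induction b with
  | zero =>
    intro r ri rj hri hrj
    by_cases hc : ∀ l : Fin r, (ri l : ℕ) ≤ (rj l : ℕ) + 0 ∧ (rj l : ℕ) ≤ (ri l : ℕ)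
    · have hrirj : ri = rj := by
        funext l
        have := hc l
        exact Fin.ext (by omega)
      have h1 : ((Xmat a ^ 0).submatrix ri rj) = 1 := by
        subst hrirj
        ext k m
        simp only [pow_zero, Matrix.submatrix_apply, Matrix.one_apply,
          hri.injective.eq_iff]
      rw [h1, Matrix.det_one]
      exact ⟨zero_le_one, fun _ => zero_lt_one⟩
    · push_neg at hc
      obtain ⟨l, hl⟩ := hc
      have hv : (ri l : ℕ) < (rj l : ℕ) ∨ (rj l : ℕ) + 0 < (ri l : ℕ) := by omega
      rw [det_submatrix_eq_zero_of_violation ri rj hri.monotone hrj.monotone l hv]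
      exact ⟨le_refl 0, fun hc' => absurd (hc' l) (by omega)⟩
  | succ b ih =>
    intro r ri rj hri hrj
    classical
    set M := Xmat a ^ b with hM
    -- rows of the submatrix split as u + v
    set u : Fin r → (Fin r → ℤ) := fun k m => M (ri k) (rj m) with hu
    set v : Fin r → (Fin r → ℤ) :=
      fun k m => if h : 0 < (ri k : ℕ) then M ⟨(ri k : ℕ) - 1, by omega⟩ (rj m) else 0
      with hv
    have hsplit : ((Xmat a ^ (b + 1)).submatrix ri rj).det =
        ∑ s : Finset (Fin r),
          (Matrix.detRowAlternating : (Fin r → ℤ) [⋀^Fin r]→ₗ[ℤ] ℤ) (s.piecewise u v) := by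
      have hof : ((Xmat a ^ (b + 1)).submatrix ri rj) = Matrix.of (u + v) := by
        ext k m
        rw [Matrix.submatrix_apply, pow_succ', Xmat_mul_apply]
        rfl
      rw [hof]
      show (Matrix.detRowAlternating : (Fin r → ℤ) [⋀^Fin r]→ₗ[ℤ] ℤ) (u + v) = _
      exact (Matrix.detRowAlternating :
        (Fin r → ℤ) [⋀^Fin r]→ₗ[ℤ] ℤ).toMultilinearMap.map_add_univ u v
    -- analysis of a single term
    have hterm : ∀ s : Finset (Fin r),
        (∃ k, k ∉ s ∧ (ri k : ℕ) = 0) ∨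
        ∃ ri' : Fin r → Fin a,
          (∀ k, (ri' k : ℕ) ≤ (ri k : ℕ) ∧ (ri k : ℕ) ≤ (ri' k : ℕ) + 1 ∧
            (k ∈ s → ri' k = ri k) ∧ (k ∉ s → (ri' k : ℕ) + 1 = (ri k : ℕ))) ∧
          (Matrix.detRowAlternating : (Fin r → ℤ) [⋀^Fin r]→ₗ[ℤ] ℤ) (s.piecewise u v) =
            (M.submatrix ri' rj).det := by
      intro s
      by_cases hz : ∃ k, k ∉ s ∧ (ri k : ℕ) = 0
      · exact Or.inl hz
      · push_neg at hz
        refine Or.inr ⟨fun k => if hk : k ∈ s then ri k else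
          ⟨(ri k : ℕ) - 1, by have := (ri k).2; omega⟩, ?_, ?_⟩
        · intro k
          by_cases hk : k ∈ s
          · beta_reduce
            rw [dif_pos hk]
            exact ⟨le_refl _, by omega, fun _ => rfl, fun h => absurd hk h⟩
          · have h0 : 0 < (ri k : ℕ) := Nat.pos_of_ne_zero (hz k hk)
            beta_reduce
            rw [dif_neg hk]
            exact ⟨show (ri k : ℕ) - 1 ≤ (ri k : ℕ) by omega,
              show (ri k : ℕ) ≤ (ri k : ℕ) - 1 + 1 by omega,
              fun h => absurd h hk,
              fun _ => show (ri k : ℕ) - 1 + 1 = (ri k : ℕ) by omega⟩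
        · congr 1
          funext k m
          by_cases hk : k ∈ s
          · rw [Finset.piecewise_eq_of_mem _ _ _ hk]
            simp only [hu, dif_pos hk, Matrix.submatrix_apply]
          · rw [Finset.piecewise_eq_of_notMem _ _ _ hk]
            have h0 : 0 < (ri k : ℕ) := Nat.pos_of_ne_zero (hz k hk)
            simp only [hv, dif_pos h0, dif_neg hk, Matrix.submatrix_apply]
    -- every term is nonnegative
    have hnonneg : ∀ s : Finset (Fin r),
        0 ≤ (Matrix.detRowAlternating : (Fin r → ℤ) [⋀^Fin r]→ₗ[ℤ] ℤ) (s.piecewise u v) := by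
      intro s
      rcases hterm s with ⟨k, hk, hk0⟩ | ⟨ri', hri', heq⟩
      · have : s.piecewise u v k = 0 := by
          rw [Finset.piecewise_eq_of_notMem _ _ _ hk]
          funext m
          simp only [hv, Pi.zero_apply]
          rw [dif_neg (by omega)]
        rw [(Matrix.detRowAlternating :
          (Fin r → ℤ) [⋀^Fin r]→ₗ[ℤ] ℤ).map_coord_zero k this]
      · rw [heq]
        have hmono : Monotone ri' := by
          intro k k' hkk'
          rcases eq_or_lt_of_le hkk' with h | h
          · subst h; exact le_refl _
          · have h1 := (hri' k).1
            have h2 := (hri' k').2.1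
            have h3 : (ri k : ℕ) < (ri k' : ℕ) := hri h
            rw [Fin.le_def]
            omega
        by_cases hinj : Function.Injective ri'
        · exact (ih r ri' rj (hmono.strictMono_of_injective hinj) hrj).1
        · simp only [Function.Injective] at hinj
          push_neg at hinj
          obtain ⟨k, k', hkk', hne⟩ := hinj
          have : (M.submatrix ri' rj).det = 0 := by
            apply Matrix.det_zero_of_row_eq hne
            funext m
            simp only [Matrix.submatrix_apply, hkk']
          rw [this]
    constructor
    · rw [hsplit]
      exact Finset.sum_nonneg fun s _ => hnonneg s
    · intro hcond
      rw [hsplit]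
      apply Finset.sum_pos' (fun s _ => hnonneg s)
      -- the special subset: keep rows where rj k = ri k
      refine ⟨Finset.univ.filter (fun k => (rj k : ℕ) = (ri k : ℕ)), Finset.mem_univ _, ?_⟩
      set s₀ : Finset (Fin r) := Finset.univ.filter (fun k => (rj k : ℕ) = (ri k : ℕ))
        with hs₀
      have hmem : ∀ k, k ∈ s₀ ↔ (rj k : ℕ) = (ri k : ℕ) := by
        intro k; simp [hs₀]
      rcases hterm s₀ with ⟨k, hk, hk0⟩ | ⟨ri', hri', heq⟩
      · exfalso
        have h1 := (hcond k).2
        have h2 := (hmem k).not.mp hk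
        omega
      · rw [heq]
        have hstrict : StrictMono ri' := by
          intro k k' hkk'
          have h3 : (ri k : ℕ) < (ri k' : ℕ) := hri hkk'
          have h4 : (rj k : ℕ) < (rj k' : ℕ) := hrj hkk'
          rw [Fin.lt_def]
          by_cases hk' : k' ∈ s₀
          · have e1 := (hri' k').2.2.1 hk'
            have := (hri' k).1
            rw [e1]
            omega
          · have e1 := (hri' k').2.2.2 hk'
            have hne' : (rj k' : ℕ) ≠ (ri k' : ℕ) := (hmem k').not.mp hk'
            have hle' := (hcond k').2
            by_cases hk : k ∈ s₀
            · have e2 := (hri' k).2.2.1 hk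
              have heqk : (rj k : ℕ) = (ri k : ℕ) := (hmem k).mp hk
              rw [e2]
              omega
            · have e2 := (hri' k).2.2.2 hk
              omega
        apply (ih r ri' rj hstrict hrj).2
        intro l
        have h1 := (hcond l).1
        have h2 := (hcond l).2
        by_cases hl : l ∈ s₀
        · have e := (hri' l).2.2.1 hl
          have heql : (rj l : ℕ) = (ri l : ℕ) := (hmem l).mp hl
          rw [e]
          omega
        · have e := (hri' l).2.2.2 hl
          have hne : (rj l : ℕ) ≠ (ri l : ℕ) := (hmem l).not.mp hl
          omega

end Aux

/-- A minor of `X^b` (for `b < a`), formed from rows `i₁ < ⋯ < i_r` and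
columns `j₁ < ⋯ < j_r`, is strictly positive if and only if
`j_l ∈ {i_l - b, …, i_l}` for every `l`. -/
theorem det_submatrix_Xmat_pow_pos_iff (a b r : ℕ) (hb : b < a)
    (ri rj : Fin r → Fin a) (hri : StrictMono ri) (hrj : StrictMono rj) :
    0 < ((Xmat a ^ b).submatrix ri rj).det ↔
      ∀ l : Fin r, (ri l : ℤ) - (b : ℤ) ≤ (rj l : ℤ) ∧ (rj l : ℤ) ≤ (ri l : ℤ) := by
  constructor
  · intro hdet
    by_contra hc
    push_neg at hc
    obtain ⟨l, hl⟩ := hc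
    have hv : (ri l : ℕ) < (rj l : ℕ) ∨ (rj l : ℕ) + b < (ri l : ℕ) := by
      omega
    rw [det_submatrix_eq_zero_of_violation ri rj hri.monotone hrj.monotone l hv] at hdet
    exact lt_irrefl 0 hdet
  · intro hcond
    apply (det_submatrix_Xpow_nonneg_and_pos a b r ri rj hri hrj).2
    intro l
    have := hcond l
    omega
end

section
/- Let α be a primitive element of a finite field F = F_{p^N}, and let B = [b_{i,l}] be an n×n matrix over F satisfying: (1) every nonzero entry b_{i,l} equals α^{β_{i,l}} for a positive integer β_{i,l}; (2) if b_{i,l} = 0 then b_{i',l} = 0 for all i' > i, or b_{i,l'} = 0 for all l' < l; (3) if l < l' and b_{i,l} ≠ 0 ≠ b_{i,l'}, then 2β_{i,l} ≤ β_{i,l'}; (4) if i < i' and b_{i,l} ≠ 0 ≠ b_{i',l}, then 2β_{i,l} ≤ β_{i',l}. If N is greater than every exponent of α appearing as a nontrivial term of any minor of B, then every minor of B that is not trivially zero is nonzero. -/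
open Finset

/-- One step of the descent: from a row `r` with `σ r < τ r` (assuming no
"V-configuration" exists for either permutation) we produce another such row with a
strictly smaller value of `σ`. -/
private lemma perm_descent_step {m : ℕ} (σ τ : Equiv.Perm (Fin m))
    (hA : ∀ i, τ i < σ i → i ≤ σ.symm (τ i))
    (hB : ∀ i, σ i < τ i → i ≤ τ.symm (σ i))
    (r : Fin m) (hlt : σ r < τ r) :
    ∃ r', σ r' < τ r' ∧ (σ r' : ℕ) < (σ r : ℕ) := by
  set k0 := τ.symm (σ r) with hk0def
  have hτk0 : τ k0 = σ r := τ.apply_symm_apply _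
  have hk0r : r < k0 := by
    refine lt_of_le_of_ne (hB r hlt) (fun h => ?_)
    rw [← h] at hτk0
    exact absurd hτk0 (ne_of_gt hlt)
  have hnotlt : ¬ τ k0 < σ k0 := by
    intro hlt2
    have h := hA k0 hlt2
    rw [hτk0, Equiv.symm_apply_apply] at h
    exact absurd hk0r (not_lt.mpr h)
  have hne2 : σ k0 ≠ σ r := fun h => (ne_of_gt hk0r) (σ.injective h)
  have hlt3 : σ k0 < σ r := by
    rcases lt_or_eq_of_le (not_lt.mp hnotlt) with h | h
    · rwa [hτk0] at h
    · exact absurd (h ▸ hτk0) hne2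
  exact ⟨k0, lt_of_lt_of_le hlt3 (le_of_eq hτk0.symm), hlt3⟩

/-- For two distinct permutations there is always a "V-configuration". -/
private lemma perm_exists_V {m : ℕ} {σ τ : Equiv.Perm (Fin m)} (hne : σ ≠ τ) :
    (∃ i, τ i < σ i ∧ σ.symm (τ i) < i) ∨ (∃ i, σ i < τ i ∧ τ.symm (σ i) < i) := by
  by_contra h
  push_neg at h
  obtain ⟨hA, hB⟩ := h
  have descent : ∀ (σ' τ' : Equiv.Perm (Fin m)),
      (∀ i, τ' i < σ' i → i ≤ σ'.symm (τ' i)) →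
      (∀ i, σ' i < τ' i → i ≤ τ'.symm (σ' i)) →
      ∀ (k : ℕ) (r : Fin m), (σ' r : ℕ) ≤ k → σ' r < τ' r → False := by
    intro σ' τ' hA' hB' k
    induction k with
    | zero =>
        intro r hk hlt
        obtain ⟨r', _, hlt2⟩ := perm_descent_step σ' τ' hA' hB' r hlt
        omega
    | succ k ih =>
        intro r hk hlt
        obtain ⟨r', h1, h2⟩ := perm_descent_step σ' τ' hA' hB' r hlt
        exact ih r' (by omega) h1
  apply hne
  ext x
  show (σ x : ℕ) = (τ x : ℕ)
  rcases lt_trichotomy (σ x) (τ x) with h | h | h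
  · exact absurd (descent σ τ hA hB (σ x) x le_rfl h) (fun h => h)
  · exact congrArg Fin.val h
  · exact absurd (descent τ σ hB hA (τ x) x le_rfl h) (fun h => h)

/-- From a V-configuration for two nontrivial permutations we construct a nontrivial
permutation with strictly smaller exponent sum. -/
private lemma improve {F : Type} [Field F] {m : ℕ} (M : Matrix (Fin m) (Fin m) F)
    (γ : Fin m → Fin m → ℕ)
    (h1 : ∀ i l, M i l ≠ 0 → 0 < γ i l)
    (h2 : ∀ i l, M i l = 0 → (∀ i', i < i' → M i' l = 0) ∨ (∀ l', l' < l → M i l' = 0))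
    (h3 : ∀ i l l', l < l' → M i l ≠ 0 → M i l' ≠ 0 → 2 * γ i l ≤ γ i l')
    (h4 : ∀ i i' l, i < i' → M i l ≠ 0 → M i' l ≠ 0 → 2 * γ i l ≤ γ i' l)
    (σ τ : Equiv.Perm (Fin m))
    (hσ : ∀ i, M i (σ i) ≠ 0) (hτ : ∀ i, M i (τ i) ≠ 0)
    (i : Fin m) (hlt : τ i < σ i) (ha : σ.symm (τ i) < i) :
    ∃ π : Equiv.Perm (Fin m), (∀ x, M x (π x) ≠ 0) ∧
      (∑ x, γ x (π x)) < (∑ x, γ x (σ x)) := by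
  set a := σ.symm (τ i) with hadef
  have hσa : σ a = τ i := σ.apply_symm_apply _
  have hai : a < i := ha
  have hne : a ≠ i := ne_of_lt hai
  have hMil : M i (σ i) ≠ 0 := hσ i
  have hMil' : M i (τ i) ≠ 0 := hτ i
  have hMal' : M a (τ i) ≠ 0 := by rw [← hσa]; exact hσ a
  have hMal : M a (σ i) ≠ 0 := by
    intro h0
    rcases h2 a (σ i) h0 with hcol | hrow
    · exact hMil (hcol i hai)
    · exact hMal' (hrow (τ i) hlt)
  have hb1 : 2 * γ i (τ i) ≤ γ i (σ i) := h3 i (τ i) (σ i) hlt hMil' hMil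
  have hb2 : 2 * γ a (σ i) ≤ γ i (σ i) := h4 a i (σ i) hai hMal hMil
  have hb3 : 0 < γ a (τ i) := h1 a (τ i) hMal'
  refine ⟨σ * Equiv.swap i a, ?_, ?_⟩
  · intro x
    rcases eq_or_ne x i with h | hxi
    · rw [h]
      show M i (σ (Equiv.swap i a i)) ≠ 0
      rw [Equiv.swap_apply_left, hσa]
      exact hMil'
    · rcases eq_or_ne x a with h | hxa
      · rw [h]
        show M a (σ (Equiv.swap i a a)) ≠ 0
        rw [Equiv.swap_apply_right]
        exact hMal
      · show M x (σ (Equiv.swap i a x)) ≠ 0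
        rw [Equiv.swap_apply_of_ne_of_ne hxi hxa]
        exact hσ x
  · have hsplit : ∀ g : Fin m → ℕ,
        ∑ x, g x = g i + (g a + ∑ x ∈ Finset.univ \ {i, a}, g x) := by
      intro g
      have huniv : (Finset.univ : Finset (Fin m))
          = insert i (insert a (Finset.univ \ {i, a})) := by
        ext x
        simp only [Finset.mem_univ, Finset.mem_insert, Finset.mem_sdiff, true_iff,
          Finset.mem_singleton, true_and]
        by_cases hx1 : x = i
        · tauto
        · by_cases hx2 : x = a <;> tauto
      have hm1 : i ∉ insert a (Finset.univ \ {i, a}) := by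
        simp [Finset.mem_insert, Finset.mem_sdiff, Ne.symm hne]
      have hm2 : a ∉ Finset.univ \ {i, a} := by simp
      conv_lhs => rw [huniv]
      rw [Finset.sum_insert hm1, Finset.sum_insert hm2]
    rw [hsplit (fun x => γ x ((σ * Equiv.swap i a) x)), hsplit (fun x => γ x (σ x))]
    have hπi : (σ * Equiv.swap i a) i = τ i := by
      show σ (Equiv.swap i a i) = τ i
      rw [Equiv.swap_apply_left, hσa]
    have hπa : (σ * Equiv.swap i a) a = σ i := by
      show σ (Equiv.swap i a a) = σ i
      rw [Equiv.swap_apply_right]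
    have hrest : ∑ x ∈ Finset.univ \ {i, a}, γ x ((σ * Equiv.swap i a) x)
        = ∑ x ∈ Finset.univ \ {i, a}, γ x (σ x) := by
      refine Finset.sum_congr rfl (fun x hx => ?_)
      simp only [Finset.mem_sdiff, Finset.mem_univ, Finset.mem_insert,
        Finset.mem_singleton, true_and] at hx
      push_neg at hx
      have : (σ * Equiv.swap i a) x = σ x := by
        show σ (Equiv.swap i a x) = σ x
        rw [Equiv.swap_apply_of_ne_of_ne hx.1 hx.2]
      rw [this]
    rw [hrest, hπi, hπa, hσa]
    omega

/-- (Theorem 3.3 of [dr16].) Let `α` be a primitive element of the finite field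
`F = F_{p^N}` and let `B` be an `n × n` matrix over `F` whose nonzero entries are
powers `α ^ β i l` with `β i l > 0`, such that
(2) if `B i l = 0` then `B i' l = 0` for all `i' > i`, or `B i l' = 0` for all `l' < l`;
(3) entries in a row double exponents left to right; (4) entries in a column double
exponents top to bottom.  If `N` is greater than every exponent of `α` appearing as a
nontrivial term of any minor of `B`, then every minor of `B` that is not trivially
zero is nonzero.  (A minor is given by rows `ri` and columns `rj`, strictly
increasing; a term of its Leibniz expansion is nontrivial iff all its factors are
nonzero, and the minor is not trivially zero iff some term is nontrivial.) -/
theorem minors_ne_zero_of_exponent_conditions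
    (p N : ℕ) (hp : p.Prime) (F : Type) [Field F] [Fintype F]
    (hF : Fintype.card F = p ^ N)
    (α : F) (hα : orderOf α = Fintype.card F - 1)
    (n : ℕ) (B : Matrix (Fin n) (Fin n) F) (β : Fin n → Fin n → ℕ)
    (h1 : ∀ i l, B i l ≠ 0 → 0 < β i l ∧ B i l = α ^ β i l)
    (h2 : ∀ i l, B i l = 0 →
      (∀ i', i < i' → B i' l = 0) ∨ (∀ l', l' < l → B i l' = 0))
    (h3 : ∀ i l l', l < l' → B i l ≠ 0 → B i l' ≠ 0 → 2 * β i l ≤ β i l')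
    (h4 : ∀ i i' l, i < i' → B i l ≠ 0 → B i' l ≠ 0 → 2 * β i l ≤ β i' l)
    (hN : ∀ (r : ℕ) (ri rj : Fin r → Fin n), StrictMono ri → StrictMono rj →
      ∀ σ : Equiv.Perm (Fin r), (∀ i, B (ri i) (rj (σ i)) ≠ 0) →
        (∑ i, β (ri i) (rj (σ i))) < N) :
    ∀ (r : ℕ) (ri rj : Fin r → Fin n), StrictMono ri → StrictMono rj →
      (∃ σ : Equiv.Perm (Fin r), ∀ i, B (ri i) (rj (σ i)) ≠ 0) →
        (B.submatrix ri rj).det ≠ 0 := by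
  classical
  intro r ri rj hri hrj hex
  obtain ⟨σ₀, hσ₀⟩ := hex
  set M : Matrix (Fin r) (Fin r) F := B.submatrix ri rj with hMdef
  set γ : Fin r → Fin r → ℕ := fun i j => β (ri i) (rj j) with hγdef
  have hM : ∀ i j, M i j = B (ri i) (rj j) := fun i j => rfl
  have h1' : ∀ i l, M i l ≠ 0 → 0 < γ i l := fun i l h => (h1 _ _ h).1
  have h1pow : ∀ i l, M i l ≠ 0 → M i l = α ^ γ i l := fun i l h => (h1 _ _ h).2
  have h2' : ∀ i l, M i l = 0 →
      (∀ i', i < i' → M i' l = 0) ∨ (∀ l', l' < l → M i l' = 0) := by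
    intro i l h0
    rcases h2 (ri i) (rj l) h0 with hc | hr
    · exact Or.inl (fun i' hi' => hc (ri i') (hri hi'))
    · exact Or.inr (fun l' hl' => hr (rj l') (hrj hl'))
  have h3' : ∀ i l l', l < l' → M i l ≠ 0 → M i l' ≠ 0 → 2 * γ i l ≤ γ i l' :=
    fun i l l' hll' => h3 (ri i) (rj l) (rj l') (hrj hll')
  have h4' : ∀ i i' l, i < i' → M i l ≠ 0 → M i' l ≠ 0 → 2 * γ i l ≤ γ i' l :=
    fun i i' l hii' => h4 (ri i) (ri i') (rj l) (hri hii')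
  set NT : Finset (Equiv.Perm (Fin r)) :=
    Finset.univ.filter (fun σ => ∀ i, M i (σ i) ≠ 0) with hNTdef
  set f : Equiv.Perm (Fin r) → ℕ := fun σ => ∑ i, γ i (σ i) with hfdef
  have hmemNT : ∀ σ, σ ∈ NT ↔ ∀ i, M i (σ i) ≠ 0 := by
    intro σ; simp [hNTdef]
  have hNT0 : σ₀ ∈ NT := (hmemNT σ₀).mpr hσ₀
  have hfN : ∀ σ ∈ NT, f σ < N := by
    intro σ hσ
    exact hN r ri rj hri hrj σ ((hmemNT σ).mp hσ)
  obtain ⟨σs, hσsmem, hmin⟩ := NT.exists_min_image f ⟨σ₀, hNT0⟩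
  have hσs : ∀ i, M i (σs i) ≠ 0 := (hmemNT σs).mp hσsmem
  have huniq : ∀ τ ∈ NT, τ ≠ σs → f σs < f τ := by
    intro τ hτmem hτne
    have hτ : ∀ i, M i (τ i) ≠ 0 := (hmemNT τ).mp hτmem
    rcases lt_or_eq_of_le (hmin τ hτmem) with h | heq
    · exact h
    · exfalso
      rcases perm_exists_V (show σs ≠ τ from fun h => hτne h.symm) with
        ⟨i, hV1, hV2⟩ | ⟨i, hV1, hV2⟩
      · obtain ⟨π, hπ, hπlt⟩ :=
          improve M γ h1' h2' h3' h4' σs τ hσs hτ i hV1 hV2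
        exact absurd (hmin π ((hmemNT π).mpr hπ)) (not_le.mpr hπlt)
      · obtain ⟨π, hπ, hπlt⟩ :=
          improve M γ h1' h2' h3' h4' τ σs hτ hσs i hV1 hV2
        have hπlt' : f π < f σs := by rw [heq]; exact hπlt
        exact absurd (hmin π ((hmemNT π).mpr hπ)) (not_le.mpr hπlt')
  -- the determinant as a sum of powers of `α`
  have hdet : M.det = ∑ σ ∈ NT, ((Equiv.Perm.sign σ : ℤ) : F) * α ^ f σ := by
    rw [← Matrix.det_transpose, Matrix.det_apply']
    rw [← Finset.sum_subset (Finset.subset_univ NT) ?_]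
    · refine Finset.sum_congr rfl (fun σ hσ => ?_)
      have hσ' : ∀ i, M i (σ i) ≠ 0 := (hmemNT σ).mp hσ
      congr 1
      calc ∏ i, M.transpose (σ i) i = ∏ i, M i (σ i) := rfl
        _ = ∏ i, α ^ γ i (σ i) :=
            Finset.prod_congr rfl (fun i _ => h1pow i (σ i) (hσ' i))
        _ = α ^ f σ := Finset.prod_pow_eq_pow_sum _ _ _
    · intro σ _ hσ
      have : ∃ i, M i (σ i) = 0 := by
        by_contra hcon
        push_neg at hcon
        exact hσ ((hmemNT σ).mpr hcon)
      obtain ⟨i, hi⟩ := this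
      have : ∏ j, M.transpose (σ j) j = 0 := by
        apply Finset.prod_eq_zero (Finset.mem_univ i)
        show M i (σ i) = 0
        exact hi
      rw [this, mul_zero]
  intro hdet0
  rw [hdet] at hdet0
  -- field-theoretic setup
  haveI : Fact p.Prime := ⟨hp⟩
  have hN0 : 0 < N := by
    by_contra hcon
    have : N = 0 := by omega
    rw [this, pow_zero] at hF
    have := Fintype.one_lt_card (α := F)
    omega
  have hcharP : CharP F p := by
    obtain ⟨m, hrp, hcard⟩ := FiniteField.card F (ringChar F)
    have hdvd : p ∣ (ringChar F) ^ (m : ℕ) := by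
      rw [← hcard, hF]
      exact dvd_pow_self p hN0.ne'
    have : p = ringChar F :=
      (Nat.prime_dvd_prime_iff_eq hp hrp).mp (hp.dvd_of_dvd_pow hdvd)
    exact this ▸ ringChar.charP F
  haveI := hcharP
  letI : Algebra (ZMod p) F := ZMod.algebra F p
  have hrank : Module.finrank (ZMod p) F = N := by
    have hc := Module.card_eq_pow_finrank (K := ZMod p) (V := F)
    rw [hF, ZMod.card] at hc
    exact (Nat.pow_right_injective hp.two_le hc.symm)
  have hα0 : α ≠ 0 := by
    intro h0
    have h1p := pow_orderOf_eq_one α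
    rw [hα, h0] at h1p
    have hcard1 : 1 < Fintype.card F := Fintype.one_lt_card
    rw [zero_pow (by omega)] at h1p
    exact zero_ne_one h1p
  -- α generates all nonzero elements
  have hgen : ∀ x : F, x ≠ 0 → ∃ k : ℕ, α ^ k = x := by
    intro x hx
    set u : Fˣ := Units.mk0 α hα0 with hudef
    have horder : orderOf u = Fintype.card Fˣ := by
      have h1u : orderOf ((u : F)) = orderOf u := orderOf_units
      have h2u : (u : F) = α := rfl
      rw [h2u, hα] at h1u
      rw [← h1u, Fintype.card_units]
    have htop : Subgroup.zpowers u = ⊤ := by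
      apply Subgroup.eq_top_of_card_eq
      rw [Nat.card_zpowers, horder, Nat.card_eq_fintype_card]
    have hmem : Units.mk0 x hx ∈ Subgroup.zpowers u := htop ▸ Subgroup.mem_top _
    have hmem' : Units.mk0 x hx ∈ Submonoid.powers u :=
      mem_powers_iff_mem_zpowers.mpr hmem
    obtain ⟨k, hk⟩ := hmem'
    refine ⟨k, ?_⟩
    have := congrArg (Units.val) hk
    rw [Units.val_pow_eq_pow_val] at this
    exact this
  have hadj : IntermediateField.adjoin (ZMod p) {α} = ⊤ := by
    rw [eq_top_iff]
    intro x _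
    by_cases hx : x = 0
    · rw [hx]; exact zero_mem _
    · obtain ⟨k, hk⟩ := hgen x hx
      rw [← hk]
      exact pow_mem (IntermediateField.mem_adjoin_simple_self (ZMod p) α) k
  have hint : IsIntegral (ZMod p) α := IsIntegral.of_finite (ZMod p) α
  have hdegmin : (minpoly (ZMod p) α).natDegree = N := by
    have hfr := IntermediateField.adjoin.finrank hint
    rw [hadj, IntermediateField.finrank_top', hrank] at hfr
    exact hfr.symm
  -- the polynomial
  set P : Polynomial (ZMod p) :=
    ∑ σ ∈ NT, Polynomial.C (((Equiv.Perm.sign σ : ℤ) : ZMod p)) * Polynomial.X ^ f σ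
    with hPdef
  have hPaeval : Polynomial.aeval α P = 0 := by
    rw [hPdef, map_sum, ← hdet0]
    refine Finset.sum_congr rfl (fun σ _ => ?_)
    rw [map_mul, map_pow, Polynomial.aeval_X, Polynomial.aeval_C]
    congr 1
    exact map_intCast (algebraMap (ZMod p) F) _
  have hP0 : P ≠ 0 := by
    intro h0
    have hc : P.coeff (f σs) = 0 := by rw [h0]; simp
    rw [hPdef, Polynomial.finset_sum_coeff] at hc
    have hc2 : ∀ σ ∈ NT, σ ≠ σs →
        (Polynomial.C (((Equiv.Perm.sign σ : ℤ) : ZMod p)) * Polynomial.X ^ f σ).coeff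
          (f σs) = 0 := by
      intro σ hσ hne
      rw [Polynomial.coeff_C_mul, Polynomial.coeff_X_pow]
      have : f σs ≠ f σ := ne_of_lt (huniq σ hσ hne)
      simp [this]
    rw [Finset.sum_eq_single σs hc2 (fun h => absurd hσsmem h)] at hc
    rw [Polynomial.coeff_C_mul, Polynomial.coeff_X_pow] at hc
    simp only [if_pos rfl, mul_one] at hc
    rcases Int.units_eq_one_or (Equiv.Perm.sign σs) with h | h <;> rw [h] at hc
    · simp at hc
    · simp at hc
  have hdegP : P.degree < (N : ℕ) := by
    rw [hPdef]
    apply lt_of_le_of_lt (Polynomial.degree_sum_le _ _)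
    rw [Finset.sup_lt_iff (by exact WithBot.bot_lt_coe _)]
    intro σ hσ
    exact lt_of_le_of_lt (Polynomial.degree_C_mul_X_pow_le _ _)
      (WithBot.coe_lt_coe.mpr (hfN σ hσ))
  have hle := minpoly.degree_le_of_ne_zero (ZMod p) α hP0 hPaeval
  have hdegmin' : (minpoly (ZMod p) α).degree = (N : ℕ) := by
    rw [Polynomial.degree_eq_natDegree (minpoly.ne_zero hint), hdegmin]
  rw [hdegmin'] at hle
  exact absurd (lt_of_le_of_lt hle hdegP) (lt_irrefl _)
end

section
/- Let n, k, ν, L be positive integers with k < n, and let H_0, …, H_ν ∈ F^{(n−k)×n}. Form the partial parity-check matrix 𝔥 ∈ F^{(L+1)(n−k) × (ν+L+1)n} whose (s,t) block (for 0 ≤ s ≤ L, 0 ≤ t ≤ ν+L) is H_{ν−(t−s)} when 0 ≤ t−s ≤ ν and 0 otherwise. A full-size minor of 𝔥 formed by columns j_1 < ⋯ < j_{(L+1)(n−k)} is not trivially zero if and only if j_{(n−k)s+1} > sn and j_{(n−k)s} ≤ sn + νn for all s = 1, …, L. -/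
/-- The partial parity-check matrix `𝔥 ∈ F^{(L+1)(n-k) × (ν+L+1)n}` built from
coefficient matrices `H 0, …, H ν ∈ F^{(n-k) × n}`: its `(s,t)` block (for
`0 ≤ s ≤ L`, `0 ≤ t ≤ ν+L`) is `H (ν - (t-s))` when `s ≤ t ≤ s + ν` and `0`
otherwise, i.e. the `s`-th block row is `[0 … 0 H_ν … H_0 0 … 0]`. -/
def ppcm (F : Type) [Field F] (n k ν L : ℕ)
    (H : Fin (ν + 1) → Matrix (Fin (n - k)) (Fin n) F) :
    Matrix (Fin ((L + 1) * (n - k))) (Fin ((ν + L + 1) * n)) F :=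
  fun r c =>
    if h : (r : ℕ) % (n - k) < n - k ∧ (c : ℕ) % n < n ∧
        (r : ℕ) / (n - k) ≤ (c : ℕ) / n ∧ (c : ℕ) / n ≤ (r : ℕ) / (n - k) + ν then
      H ⟨ν - ((c : ℕ) / n - (r : ℕ) / (n - k)), by omega⟩ ⟨_, h.1⟩ ⟨_, h.2.1⟩
    else 0

/-- The index conditions of Lemma `index`: for `s = 1,…,L` (in 1-based
numbering) `j_{(n-k)s+1} > sn` and `j_{(n-k)s} ≤ sn + νn`; here stated
0-based: the column at 0-based position `(n-k)s` has value `≥ sn`, and the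
column at 0-based position `(n-k)s - 1` has value `< sn + νn`. -/
def colCond (n k ν L : ℕ) {A Nc : ℕ} (j : Fin A → Fin Nc) : Prop :=
  ∀ l : Fin A, ∀ s : ℕ, 1 ≤ s → s ≤ L →
    ((l : ℕ) = (n - k) * s → s * n ≤ (j l : ℕ)) ∧
    ((l : ℕ) + 1 = (n - k) * s → (j l : ℕ) < s * n + ν * n)

/-!
If a condition fails, say `j_{(n-k)s+1} ≤ sn`, then the first `(n-k)s+1` columns of the minor
are supported on its first `(n-k)s` rows, so the minor vanishes for every choice of the `H_d`;
the other condition is dual. Conversely, the conditions say exactly that every diagonal entry of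
the minor lies in one of the blocks `H_0, …, H_ν`. Replace the entries of the `H_d` by
indeterminates. The entry of `H_d` sitting at position `(r, c)` of `𝔥` determines
`n r - (n-k) c`, so a permutation `σ` whose term carries the diagonal monomial satisfies
`∑ (n σ(i) - (n-k) j_i)² = ∑ (n i - (n-k) j_i)²`, i.e. `∑ σ(i) j_i = ∑ i j_i`, and the equality
case of the rearrangement inequality forces `σ = id`. Hence the generic minor is a nonzero
polynomial, which has a non-root over the infinite field `F`.
-/

open Finset MvPolynomial

theorem Matrix.det_eq_zero_of_card_lt {ι R : Type*} [Fintype ι] [DecidableEq ι] [CommRing R]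
    (M : Matrix ι ι R) (rows cols : Finset ι) (hcard : #rows < #cols)
    (hzero : ∀ c ∈ cols, ∀ r ∉ rows, M r c = 0) : M.det = 0 := by
  rw [Matrix.det_apply]
  refine sum_eq_zero fun σ _ => ?_
  obtain ⟨c, hc, hσc⟩ : ∃ c ∈ cols, σ c ∉ rows := by
    by_contra! h
    exact hcard.not_ge (card_le_card_of_injOn σ h σ.injective.injOn)
  rw [prod_eq_zero (f := fun i => M (σ i) i) (mem_univ c) (hzero c hc _ hσc), smul_zero]

theorem Finsupp.sum_comp_eq_of_sum_single_eq {ι κ M : Type*} [Fintype ι] [AddCommMonoid M]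
    (g : κ → M) {v w : ι → κ}
    (h : ∑ i, Finsupp.single (v i) (1 : ℕ) = ∑ i, Finsupp.single (w i) 1) :
    ∑ i, g (v i) = ∑ i, g (w i) := by
  have hsum : ∀ u : ι → κ,
      ∑ i, g (u i) = (∑ i, Finsupp.single (u i) (1 : ℕ)).sum fun x c => c • g x := by
    intro u
    rw [← Finsupp.sum_finsetSum_index (h := fun x c => c • g x) (fun x => zero_smul ℕ (g x))
      (fun x _ _ => add_smul _ _ (g x))]
    simp only [Finsupp.sum_single_index, zero_smul, one_smul]
  rw [hsum, hsum, h]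

theorem Equiv.Perm.eq_one_of_sum_mul_comp_eq {ι α : Type*} [Fintype ι] [LinearOrder ι]
    [CommRing α] [LinearOrder α] [IsStrictOrderedRing α]
    {f g : ι → α} (hf : StrictMono f) (hg : StrictMono g) {σ : Equiv.Perm ι}
    (h : ∑ i, f i * g (σ i) = ∑ i, f i * g i) : σ = 1 := by
  have hmono : Monovary f (g ∘ σ) :=
    (hf.monotone.monovary hg.monotone).sum_mul_comp_perm_eq_sum_mul_iff.mp h
  have hσ : StrictMono σ := fun a b hab => by
    by_contra! hba
    have := hmono (hg (lt_of_le_of_ne hba (σ.injective.ne hab.ne')))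
    exact (hf hab).not_ge this
  exact Equiv.ext fun i => hσ.apply_eq

theorem Equiv.Perm.eq_one_of_sum_sq_sub_comp_eq {ι α : Type*} [Fintype ι] [LinearOrder ι]
    [CommRing α] [LinearOrder α] [IsStrictOrderedRing α]
    {f g : ι → α} (hf : StrictMono f) (hg : StrictMono g) {a b : α} (ha : 0 < a) (hb : 0 < b)
    {σ : Equiv.Perm ι}
    (h : ∑ i, (a * g (σ i) - b * f i) ^ 2 = ∑ i, (a * g i - b * f i) ^ 2) : σ = 1 := by
  refine eq_one_of_sum_mul_comp_eq hf hg ?_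
  have hsq : ∑ i, g (σ i) ^ 2 = ∑ i, g i ^ 2 := Equiv.sum_comp σ (g · ^ 2)
  have hexp : ∀ x : ι → α, ∑ i, (a * x i - b * f i) ^ 2
      = a ^ 2 * ∑ i, x i ^ 2 - 2 * a * b * ∑ i, f i * x i + b ^ 2 * ∑ i, f i ^ 2 := by
    intro x
    simp only [mul_sum, ← sum_sub_distrib, ← sum_add_distrib]
    exact sum_congr rfl fun i _ => by ring
  have hσexp := hexp (fun i => g (σ i))
  beta_reduce at hσexp
  have h2ab : 2 * a * b ≠ 0 := by positivity
  exact mul_left_cancel₀ h2ab (by linear_combination hσexp - hexp g - h + a ^ 2 * hsq)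

theorem MvPolynomial.det_ne_zero_of_diagonal_monomial_unique {ι σ R : Type*} [Fintype ι]
    [DecidableEq ι] [CommRing R] [Nontrivial R] (p : ι → ι → Prop) [DecidableRel p]
    (v : ι → ι → σ) (hdiag : ∀ i, p i i)
    (huniq : ∀ τ : Equiv.Perm ι, (∀ i, p (τ i) i) →
      ∑ i, Finsupp.single (v (τ i) i) (1 : ℕ) = ∑ i, Finsupp.single (v i i) 1 → τ = 1) :
    (Matrix.of fun r c => if p r c then (X (v r c) : MvPolynomial σ R) else 0).det ≠ 0 := by
  classical
  set M : Matrix ι ι (MvPolynomial σ R) := Matrix.of fun r c => if p r c then X (v r c) else 0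
  have hprod : ∀ τ : Equiv.Perm ι, (∀ i, p (τ i) i) →
      ∏ i, M (τ i) i = monomial (∑ i, Finsupp.single (v (τ i) i) 1) 1 := by
    intro τ hτ
    rw [monomial_sum_one]
    exact prod_congr rfl fun i _ => if_pos (hτ i)
  suffices hcoeff : coeff (∑ i, Finsupp.single (v i i) 1) M.det = 1 by
    intro h
    simp [h] at hcoeff
  rw [Matrix.det_apply, coeff_sum, sum_eq_single 1]
  · simpa using congrArg (coeff (∑ i, Finsupp.single (v i i) 1)) (hprod 1 hdiag)
  · intro τ _ hτ
    rw [coeff_smul]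
    by_cases hsupp : ∀ i, p (τ i) i
    · rw [hprod τ hsupp, coeff_monomial, if_neg (mt (huniq τ hsupp) hτ), smul_zero]
    · obtain ⟨i, hi⟩ := not_forall.mp hsupp
      rw [prod_eq_zero (mem_univ i) (if_neg hi), coeff_zero, smul_zero]
  · simp

/-- Entry `(r, c)` of `𝔥` (with `m = n - k`) lies in one of the blocks `H_0, …, H_ν`. -/
abbrev InBand (m n ν r c : ℕ) : Prop := r / m ≤ c / n ∧ c / n ≤ r / m + ν

theorem colCond_of_forall_inBand {n k ν L : ℕ}
    {j : Fin ((L + 1) * (n - k)) → Fin ((ν + L + 1) * n)}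
    (hband : ∀ l : Fin ((L + 1) * (n - k)), InBand (n - k) n ν l (j l)) :
    colCond n k ν L j := by
  unfold colCond
  revert j
  generalize n - k = m
  intro j hband l s hs hsL
  have hm : 0 < m := Nat.pos_of_mul_pos_left l.pos
  have hn : 0 < n := Nat.pos_of_mul_pos_left (j l).pos
  constructor
  · intro hl
    have hlow := (hband l).1
    rw [hl, Nat.mul_div_cancel_left s hm] at hlow
    exact (Nat.le_div_iff_mul_le hn).1 hlow
  · intro hl
    obtain ⟨t, rfl⟩ : ∃ t, s = t + 1 := ⟨s - 1, by omega⟩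
    have hexp : m * (t + 1) = t * m + m := by ring
    have hexp' : (t + 1) * m = t * m + m := by ring
    have hdiv : (l : ℕ) / m = t := Nat.div_eq_of_lt_le (by omega) (by omega)
    have hup := (hband l).2
    rw [hdiv] at hup
    have := (Nat.div_lt_iff_lt_mul hn).1 (show (j l : ℕ) / n < t + 1 + ν by omega)
    linarith [add_mul (t + 1) ν n]

theorem forall_inBand_of_colCond {n k ν L : ℕ}
    {j : Fin ((L + 1) * (n - k)) → Fin ((ν + L + 1) * n)} (hj : Monotone j)
    (hcc : colCond n k ν L j) :
    ∀ l : Fin ((L + 1) * (n - k)), InBand (n - k) n ν l (j l) := by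
  unfold colCond at hcc
  revert j
  generalize n - k = m
  intro j hj hcc l
  have hm : 0 < m := Nat.pos_of_mul_pos_left l.pos
  have hn : 0 < n := Nat.pos_of_mul_pos_left (j l).pos
  show (l : ℕ) / m ≤ (j l : ℕ) / n ∧ (j l : ℕ) / n ≤ l / m + ν
  generalize hs_def : (l : ℕ) / m = s
  have hsL : s < L + 1 := hs_def ▸ (Nat.div_lt_iff_lt_mul hm).2 l.isLt
  have hlo : m * s ≤ l := hs_def ▸ Nat.mul_div_le (l : ℕ) m
  have hhi : l < m * (s + 1) := hs_def ▸ Nat.lt_mul_div_succ (l : ℕ) hm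
  have hsize : (L + 1) * m = m * L + m := by ring
  have hsucc : m * (s + 1) = m * s + m := by ring
  constructor
  · rcases Nat.eq_zero_or_pos s with h0 | hs
    · simp [h0]
    · have hfirst := (hcc ⟨m * s, by omega⟩ s hs (by omega)).1 rfl
      exact (Nat.le_div_iff_mul_le hn).2 (hfirst.trans (hj (Fin.le_def.2 hlo)))
  · rcases Nat.lt_or_ge s L with hs | hs
    · have hblock : m * (s + 1) ≤ m * L := Nat.mul_le_mul_left m hs
      have hl₁ : m * (s + 1) - 1 < (L + 1) * m := by omega
      have hlast := (hcc ⟨_, hl₁⟩ (s + 1) (by omega) hs).2 (by rw [Fin.val_mk]; omega)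
      have hll₁ : l ≤ ⟨_, hl₁⟩ := Fin.le_def.2 (show (l : ℕ) ≤ m * (s + 1) - 1 by omega)
      have hjl : (j l : ℕ) < (s + 1 + ν) * n := by
        have := Nat.lt_of_le_of_lt (hj hll₁) hlast
        linarith [add_mul (s + 1) ν n]
      have := (Nat.div_lt_iff_lt_mul hn).2 hjl
      omega
    · have := (Nat.div_lt_iff_lt_mul hn).2 (j l).isLt
      omega

theorem det_eq_zero_of_not_inBand {R : Type*} [CommRing R] {N m n ν : ℕ}
    (M : Matrix (Fin N) (Fin N) R) {j : Fin N → ℕ} (hj : Monotone j)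
    (hM : ∀ r c : Fin N, ¬ InBand m n ν r (j c) → M r c = 0) {l : Fin N}
    (hl : ¬ InBand m n ν l (j l)) : M.det = 0 := by
  rcases not_and_or.mp hl with hlow | hhigh
  · have hcard : #(Iio l) < #(Iic l) := by rw [Fin.card_Iio, Fin.card_Iic]; omega
    refine M.det_eq_zero_of_card_lt (Iio l) (Iic l) hcard fun c hc r hr => hM r c fun hrc => ?_
    have hc' := Nat.div_le_div_right (c := n) (hj (mem_Iic.1 hc))
    have hr' := Nat.div_le_div_right (c := m) (Fin.le_def.1 (not_lt.1 (mem_Iio.not.1 hr)))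
    omega
  · have hcard : #(Ioi l) < #(Ici l) := by rw [Fin.card_Ioi, Fin.card_Ici]; omega
    refine M.det_eq_zero_of_card_lt (Ioi l) (Ici l) hcard fun c hc r hr => hM r c fun hrc => ?_
    have hc' := Nat.div_le_div_right (c := n) (hj (mem_Ici.1 hc))
    have hr' := Nat.div_le_div_right (c := m) (Fin.le_def.1 (not_lt.1 (mem_Ioi.not.1 hr)))
    omega

/-- The entry `(a, b)` of `H_d` that sits at position `(r, c)` of `𝔥`, as a triple `(d, a, b)`. -/
def ppcmVar {n k ν L : ℕ} (r : Fin ((L + 1) * (n - k))) (c : Fin ((ν + L + 1) * n)) :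
    Fin (ν + 1) × Fin (n - k) × Fin n :=
  (⟨ν - (c / n - r / (n - k)), by omega⟩,
    ⟨r % (n - k), Nat.mod_lt _ (Nat.pos_of_mul_pos_left r.pos)⟩,
    ⟨c % n, Nat.mod_lt _ (Nat.pos_of_mul_pos_left c.pos)⟩)

theorem ppcm_apply_of_inBand {F : Type} [Field F] {n k ν L : ℕ}
    (H : Fin (ν + 1) → Matrix (Fin (n - k)) (Fin n) F) {r : Fin ((L + 1) * (n - k))}
    {c : Fin ((ν + L + 1) * n)} (h : InBand (n - k) n ν r c) :
    ppcm F n k ν L H r c = H (ppcmVar r c).1 (ppcmVar r c).2.1 (ppcmVar r c).2.2 :=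
  dif_pos ⟨Nat.mod_lt _ (Nat.pos_of_mul_pos_left r.pos),
    Nat.mod_lt _ (Nat.pos_of_mul_pos_left c.pos), h⟩

theorem ppcm_apply_of_not_inBand {F : Type} [Field F] {n k ν L : ℕ}
    (H : Fin (ν + 1) → Matrix (Fin (n - k)) (Fin n) F) {r : Fin ((L + 1) * (n - k))}
    {c : Fin ((ν + L + 1) * n)} (h : ¬ InBand (n - k) n ν r c) : ppcm F n k ν L H r c = 0 :=
  dif_neg fun h' => h h'.2.2

/-- Positions of `𝔥` holding the same entry of `H_d` differ by multiples of `(n - k, n)`, so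
`n r - (n - k) c` depends only on the entry; this is that value. -/
def ppcmVarWeight (n k ν : ℕ) (x : Fin (ν + 1) × Fin (n - k) × Fin n) : ℤ :=
  ((n - k : ℕ) : ℤ) * n * ((x.1 : ℤ) - ν) + n * (x.2.1 : ℤ) - (n - k : ℕ) * (x.2.2 : ℤ)

theorem ppcmVarWeight_ppcmVar {n k ν L : ℕ} {r : Fin ((L + 1) * (n - k))}
    {c : Fin ((ν + L + 1) * n)} (h : InBand (n - k) n ν r c) :
    ppcmVarWeight n k ν (ppcmVar r c) = n * (r : ℤ) - (n - k : ℕ) * (c : ℤ) := by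
  obtain ⟨hlow, hhigh⟩ := h
  have hr : (((n - k : ℕ) * (r / (n - k)) + r % (n - k) : ℕ) : ℤ) = r := by
    rw [Nat.div_add_mod]
  have hc : ((n * (c / n) + c % n : ℕ) : ℤ) = c := by
    rw [Nat.div_add_mod]
  simp only [ppcmVarWeight, ppcmVar]
  rw [Nat.cast_sub (show (c : ℕ) / n - r / (n - k) ≤ ν by omega), Nat.cast_sub hlow]
  push_cast at hr hc ⊢
  linear_combination (n : ℤ) * hr - ((n - k : ℕ) : ℤ) * hc

noncomputable def ppcmGeneric (R : Type*) [CommSemiring R] (n k ν L : ℕ) :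
    Matrix (Fin ((L + 1) * (n - k))) (Fin ((ν + L + 1) * n))
      (MvPolynomial (Fin (ν + 1) × Fin (n - k) × Fin n) R) :=
  Matrix.of fun r c => if InBand (n - k) n ν r c then X (ppcmVar r c) else 0

theorem ppcmGeneric_map_eval {F : Type} [Field F] {n k ν L : ℕ}
    (φ : Fin (ν + 1) × Fin (n - k) × Fin n → F) :
    (ppcmGeneric F n k ν L).map (eval φ) =
      ppcm F n k ν L fun d => Matrix.of fun a b => φ (d, a, b) := by
  ext r c
  by_cases h : InBand (n - k) n ν r c
  · rw [Matrix.map_apply, ppcmGeneric, Matrix.of_apply, if_pos h, eval_X,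
      ppcm_apply_of_inBand _ h]
    rfl
  · rw [Matrix.map_apply, ppcmGeneric, Matrix.of_apply, if_neg h, map_zero,
      ppcm_apply_of_not_inBand _ h]

theorem det_ppcmGeneric_submatrix_ne_zero {R : Type*} [CommRing R] [Nontrivial R]
    {n k ν L : ℕ}
    {j : Fin ((L + 1) * (n - k)) → Fin ((ν + L + 1) * n)} (hj : StrictMono j)
    (hband : ∀ l : Fin ((L + 1) * (n - k)), InBand (n - k) n ν l (j l)) :
    ((ppcmGeneric R n k ν L).submatrix id j).det ≠ 0 := by
  refine det_ne_zero_of_diagonal_monomial_unique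
    (fun r c : Fin _ => InBand (n - k) n ν r (j c)) (fun r c => ppcmVar r (j c)) hband
    fun τ hτ hmon => ?_
  rcases isEmpty_or_nonempty (Fin ((L + 1) * (n - k))) with _ | ⟨⟨i⟩⟩
  · exact Subsingleton.elim _ _
  have hm : 0 < n - k := Nat.pos_of_mul_pos_left i.pos
  have hn : 0 < n := Nat.pos_of_mul_pos_left (j i).pos
  have hsq := Finsupp.sum_comp_eq_of_sum_single_eq (fun x => ppcmVarWeight n k ν x ^ 2) hmon
  simp only [ppcmVarWeight_ppcmVar (hτ _), ppcmVarWeight_ppcmVar (hband _)] at hsq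
  exact Equiv.Perm.eq_one_of_sum_sq_sub_comp_eq (f := fun i => (j i : ℤ)) (g := fun i => (i : ℤ))
    (fun _ _ h => by dsimp only; exact_mod_cast hj h)
    (fun _ _ h => by dsimp only; exact_mod_cast h)
    (by exact_mod_cast hn) (by exact_mod_cast hm) hsq

theorem ppcm_minor_not_trivially_zero_iff_general (F : Type) [Field F] [Infinite F]
    (n k ν L : ℕ)
    (j : Fin ((L + 1) * (n - k)) → Fin ((ν + L + 1) * n)) (hj : StrictMono j) :
    (∃ H : Fin (ν + 1) → Matrix (Fin (n - k)) (Fin n) F,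
        ((ppcm F n k ν L H).submatrix id j).det ≠ 0) ↔ colCond n k ν L j := by
  constructor
  · rintro ⟨H, hH⟩
    refine colCond_of_forall_inBand fun l => by_contra fun hl => hH ?_
    exact det_eq_zero_of_not_inBand _ (fun _ _ h => hj.monotone h)
      (fun r c hrc => ppcm_apply_of_not_inBand H hrc) hl
  · intro hcc
    have hgeneric := det_ppcmGeneric_submatrix_ne_zero (R := F) hj
      (forall_inBand_of_colCond hj.monotone hcc)
    obtain ⟨φ, hφ⟩ : ∃ φ, eval φ ((ppcmGeneric F n k ν L).submatrix id j).det ≠ 0 := by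
      by_contra! h
      exact hgeneric (MvPolynomial.funext fun φ => by simpa using h φ)
    refine ⟨fun d => Matrix.of fun a b => φ (d, a, b), ?_⟩
    rwa [RingHom.map_det, RingHom.mapMatrix_apply, ← Matrix.submatrix_map,
      ppcmGeneric_map_eval] at hφ

/-- A full-size minor of the partial parity-check matrix `𝔥`, formed by the
columns `j₁ < ⋯ < j_{(L+1)(n-k)}`, is not trivially zero (i.e. it is nonzero for
some choice of the free entries of `H_0, …, H_ν`) if and only if
`j_{(n-k)s+1} > sn` and `j_{(n-k)s} ≤ sn + νn` for all `s = 1, …, L`. -/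
theorem ppcm_minor_not_trivially_zero_iff (F : Type) [Field F] [Infinite F]
    (n k ν L : ℕ) (hk : k < n) (hk0 : 0 < k) (hν : 0 < ν) (hL : 0 < L)
    (j : Fin ((L + 1) * (n - k)) → Fin ((ν + L + 1) * n)) (hj : StrictMono j) :
    (∃ H : Fin (ν + 1) → Matrix (Fin (n - k)) (Fin n) F,
        ((ppcm F n k ν L H).submatrix id j).det ≠ 0) ↔ colCond n k ν L j :=
  ppcm_minor_not_trivially_zero_iff_general F n k ν L j hj
end

section
/- Let H(z) = H_0 + H_1 z + ⋯ + H_ν z^ν ∈ F[z]^{(n−k)×n} and suppose that every not-trivially-zero full-size minor of the partial parity-check matrix 𝔥 (with parameter L) is nonzero. Then H_ν has full row rank n−k; in particular every row of H(z) has degree exactly ν, and the sum of the row degrees of H equals ν(n−k). -/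
/-- The degree of the `r`-th row of the polynomial matrix
`H(z) = H_0 + H_1 z + ⋯ + H_ν z^ν`. -/
noncomputable def rowDeg (F : Type) [Field F] (n k ν : ℕ)
    (H : Fin (ν + 1) → Matrix (Fin (n - k)) (Fin n) F) (r : Fin (n - k)) : ℕ :=
  Finset.univ.sup fun c : Fin n =>
    (∑ i : Fin (ν + 1), Polynomial.C (H i r c) * Polynomial.X ^ (i : ℕ)).natDegree

/-!
Select the first `n - k` columns of each of the block columns `0, …, L` of `𝔥`. This minor
is not trivially zero, and the chosen square submatrix is block upper triangular with last
block row `[0 … 0 H_ν']`, where `H_ν'` consists of columns of `H_ν`. So if `v ≠ 0` had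
`v H_ν = 0`, then `(0, …, 0, v)` would lie in the left kernel of the minor. Hence the rows of
`H_ν` are linearly independent, in particular nonzero, and a nonzero row of `H_ν` forces the
corresponding row of `H(z)` to have degree exactly `ν`.
-/

open Matrix Polynomial

section BlockRows

variable {F : Type} [Field F] {n k ν L : ℕ} (H : Fin (ν + 1) → Matrix (Fin (n - k)) (Fin n) F)

theorem ppcm_eq_zero_of_lt {r : Fin ((L + 1) * (n - k))} {c : Fin ((ν + L + 1) * n)}
    (h : (c : ℕ) / n < (r : ℕ) / (n - k)) : ppcm F n k ν L H r c = 0 :=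
  dif_neg fun h' => (h.trans_le h'.2.2.1).false

theorem ppcm_eq_of_div_eq {r : Fin ((L + 1) * (n - k))} {c : Fin ((ν + L + 1) * n)}
    (h : (r : ℕ) / (n - k) = (c : ℕ) / n) :
    ppcm F n k ν L H r c = H (Fin.last ν) r.modNat c.modNat := by
  rw [ppcm, dif_pos ⟨r.modNat.isLt, c.modNat.isLt, h.le, by omega⟩]
  congr 1
  exact Fin.ext (by simp [h])

def lastBlockRow {m : ℕ} (L : ℕ) (v : Fin m → F) : Fin ((L + 1) * m) → F :=
  fun r => if r.divNat = Fin.last L then v r.modNat else 0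

theorem lastBlockRow_ne_zero {m : ℕ} {v : Fin m → F} (hv : v ≠ 0) : lastBlockRow L v ≠ 0 := by
  obtain ⟨i, hi⟩ := Function.ne_iff.mp hv
  refine Function.ne_iff.mpr ⟨Fin.mkDivMod (Fin.last L) i, ?_⟩
  simpa [lastBlockRow] using hi

theorem vecMul_lastBlockRow_ppcm (v : Fin (n - k) → F) {c : Fin ((ν + L + 1) * n)}
    (hc : (c : ℕ) / n ≤ L) :
    (lastBlockRow L v ᵥ* ppcm F n k ν L H) c =
      if (c : ℕ) / n = L then (v ᵥ* H (Fin.last ν)) c.modNat else 0 := by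
  have hdiv : ∀ p : Fin (L + 1) × Fin (n - k), (finProdFinEquiv p).divNat = p.1 :=
    fun p => congrArg Prod.fst (finProdFinEquiv.symm_apply_apply p)
  have hmod : ∀ p : Fin (L + 1) × Fin (n - k), (finProdFinEquiv p).modNat = p.2 :=
    fun p => congrArg Prod.snd (finProdFinEquiv.symm_apply_apply p)
  simp only [vecMul, dotProduct, lastBlockRow, ite_mul, zero_mul]
  rw [← finProdFinEquiv.sum_comp, Fintype.sum_prod_type]
  simp only [hdiv, hmod]
  rw [Fintype.sum_eq_single (Fin.last L) fun s hs => by simp [hs]]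
  have hrow : ∀ i : Fin (n - k), ((finProdFinEquiv (Fin.last L, i) : ℕ)) / (n - k) = L :=
    fun i => by rw [← Fin.coe_divNat, hdiv, Fin.val_last]
  simp only [if_true]
  split_ifs with hcL
  · refine Finset.sum_congr rfl fun i _ => ?_
    rw [ppcm_eq_of_div_eq H (by rw [hrow, hcL]), hmod]
  · refine Finset.sum_eq_zero fun i _ => ?_
    rw [ppcm_eq_zero_of_lt H (by rw [hrow]; omega), mul_zero]

end BlockRows

def leadingCols (n k ν L : ℕ) : Fin ((L + 1) * (n - k)) → Fin ((ν + L + 1) * n) :=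
  fun l => Fin.mkDivMod (l.divNat.castLE (by omega)) (l.modNat.castLE (Nat.sub_le n k))

section LeadingCols

variable {n k ν L : ℕ}

theorem leadingCols_div (l : Fin ((L + 1) * (n - k))) :
    (leadingCols n k ν L l : ℕ) / n = l / (n - k) :=
  congrArg Fin.val (Fin.divNat_mkDivMod _ _)

theorem leadingCols_mod (l : Fin ((L + 1) * (n - k))) :
    (leadingCols n k ν L l : ℕ) % n = l % (n - k) :=
  congrArg Fin.val (Fin.modNat_mkDivMod _ _)

theorem strictMono_leadingCols : StrictMono (leadingCols n k ν L) := by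
  intro a b hab
  have hab' : (a : ℕ) < b := hab
  rcases (Nat.div_le_div_right (c := n - k) hab'.le).lt_or_eq with hq | hq
  · exact Nat.lt_of_div_lt_div (c := n) (by rwa [leadingCols_div, leadingCols_div])
  · have ha := Nat.div_add_mod (a : ℕ) (n - k)
    have hb := Nat.div_add_mod (b : ℕ) (n - k)
    have ha' := Nat.div_add_mod (leadingCols n k ν L a : ℕ) n
    have hb' := Nat.div_add_mod (leadingCols n k ν L b : ℕ) n
    rw [leadingCols_div, leadingCols_mod] at ha' hb'
    rw [hq] at ha ha'
    show (_ : ℕ) < _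
    omega

theorem colCond_leadingCols : colCond n k ν L (leadingCols n k ν L) := by
  intro l s _ _
  have hn : 0 < n := Nat.pos_of_mul_pos_left (leadingCols n k ν L l).pos
  have hnk : 0 < n - k := Nat.pos_of_mul_pos_left l.pos
  constructor
  · intro hl
    calc s * n = (leadingCols n k ν L l : ℕ) / n * n := by
          rw [leadingCols_div, hl, Nat.mul_div_cancel_left _ hnk]
      _ ≤ _ := Nat.div_mul_le_self _ _
  · intro hl
    have hdiv : (leadingCols n k ν L l : ℕ) / n < s := by
      rw [leadingCols_div]
      exact Nat.div_lt_of_lt_mul (by omega)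
    have := Nat.lt_mul_of_div_lt hdiv hn
    omega

end LeadingCols

theorem linearIndependent_row_of_det_ppcm_leadingCols_ne_zero {F : Type} [Field F]
    {n k ν L : ℕ} {H : Fin (ν + 1) → Matrix (Fin (n - k)) (Fin n) F}
    (h : ((ppcm F n k ν L H).submatrix id (leadingCols n k ν L)).det ≠ 0) :
    LinearIndependent F (H (Fin.last ν)).row := by
  rw [← vecMul_injective_iff, ← coe_vecMulLinear, ← LinearMap.ker_eq_bot, LinearMap.ker_eq_bot']
  intro v hv
  by_contra hv0
  refine h (exists_vecMul_eq_zero_iff.mp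
    ⟨lastBlockRow L v, lastBlockRow_ne_zero hv0, funext fun l => ?_⟩)
  have hl : (leadingCols n k ν L l : ℕ) / n ≤ L := by
    rw [leadingCols_div]
    exact Nat.lt_succ_iff.mp l.divNat.isLt
  show (lastBlockRow L v ᵥ* ppcm F n k ν L H) (leadingCols n k ν L l) = 0
  rw [vecMul_lastBlockRow_ppcm H v hl]
  simp only [coe_vecMulLinear] at hv
  simp [hv]

section Polynomial

variable {R : Type*} [Semiring R] {ν : ℕ}

theorem natDegree_sum_fin_C_mul_X_pow_le (a : Fin (ν + 1) → R) :
    (∑ i : Fin (ν + 1), C (a i) * X ^ (i : ℕ)).natDegree ≤ ν :=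
  natDegree_sum_le_of_forall_le _ _ fun i _ =>
    (natDegree_C_mul_X_pow_le _ _).trans (Nat.lt_succ_iff.mp i.isLt)

theorem coeff_sum_fin_C_mul_X_pow_last (a : Fin (ν + 1) → R) :
    (∑ i : Fin (ν + 1), C (a i) * X ^ (i : ℕ)).coeff ν = a (Fin.last ν) := by
  simp [finsetSum_coeff, Fin.sum_univ_castSucc, fun i : Fin ν => i.isLt.ne']

end Polynomial

theorem rowDeg_eq_of_row_ne_zero {F : Type} [Field F] {n k ν : ℕ}
    {H : Fin (ν + 1) → Matrix (Fin (n - k)) (Fin n) F} {r : Fin (n - k)}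
    (hr : H (Fin.last ν) r ≠ 0) : rowDeg F n k ν H r = ν := by
  obtain ⟨c, hc⟩ := Function.ne_iff.mp hr
  refine le_antisymm (Finset.sup_le fun c _ => natDegree_sum_fin_C_mul_X_pow_le _) ?_
  calc ν ≤ (∑ i : Fin (ν + 1), C (H i r c) * X ^ (i : ℕ)).natDegree :=
        le_natDegree_of_ne_zero (by rwa [coeff_sum_fin_C_mul_X_pow_last])
    _ ≤ rowDeg F n k ν H r :=
        Finset.le_sup (f := fun c => (∑ i : Fin (ν + 1), C (H i r c) * X ^ (i : ℕ)).natDegree)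
          (Finset.mem_univ c)

theorem Hnu_full_row_rank_general (F : Type) [Field F]
    (n k ν L : ℕ)
    (H : Fin (ν + 1) → Matrix (Fin (n - k)) (Fin n) F)
    (hminor : ∀ j : Fin ((L + 1) * (n - k)) → Fin ((ν + L + 1) * n),
      StrictMono j → colCond n k ν L j →
        ((ppcm F n k ν L H).submatrix id j).det ≠ 0) :
    (H (Fin.last ν)).rank = n - k ∧
    (∀ r : Fin (n - k), rowDeg F n k ν H r = ν) ∧
    (∑ r : Fin (n - k), rowDeg F n k ν H r) = ν * (n - k) := by
  have hli : LinearIndependent F (H (Fin.last ν)).row :=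
    linearIndependent_row_of_det_ppcm_leadingCols_ne_zero
      (hminor _ strictMono_leadingCols colCond_leadingCols)
  have hdeg : ∀ r, rowDeg F n k ν H r = ν := fun r => rowDeg_eq_of_row_ne_zero (hli.ne_zero r)
  refine ⟨by rw [hli.rank_matrix, Fintype.card_fin], hdeg, ?_⟩
  simp [hdeg, mul_comm]

/-- If every not-trivially-zero full-size minor of the partial parity-check
matrix `𝔥` is nonzero, then `H_ν` has full row rank `n - k`; in particular every
row of `H(z)` has degree exactly `ν`, and the sum of the row degrees of `H`
equals `ν(n-k)`. -/
theorem Hnu_full_row_rank (F : Type) [Field F]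
    (n k ν L : ℕ) (hk : k < n) (hk0 : 0 < k) (hν : 0 < ν) (hL : 0 < L)
    (H : Fin (ν + 1) → Matrix (Fin (n - k)) (Fin n) F)
    (hminor : ∀ j : Fin ((L + 1) * (n - k)) → Fin ((ν + L + 1) * n),
      StrictMono j → colCond n k ν L j →
        ((ppcm F n k ν L H).submatrix id j).det ≠ 0) :
    (H (Fin.last ν)).rank = n - k ∧
    (∀ r : Fin (n - k), rowDeg F n k ν H r = ν) ∧
    (∑ r : Fin (n - k), rowDeg F n k ν H r) = ν * (n - k) :=
  Hnu_full_row_rank_general F n k ν L H hminor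
end

section
/- For an (n,k,δ) complete MDP convolutional code, n−k divides δ. -/
lemma aux_coeff_top {F : Type} [Semiring F] (ν : ℕ) (a : Fin (ν+1) → F) :
    (∑ i : Fin (ν+1), Polynomial.C (a i) * Polynomial.X ^ (i:ℕ)).coeff ν = a (Fin.last ν) := by
  rw [Polynomial.finset_sum_coeff]
  simp only [Polynomial.coeff_C_mul, Polynomial.coeff_X_pow, mul_ite, mul_one, mul_zero]
  rw [Finset.sum_eq_single (Fin.last ν)]
  · simp [Fin.last]
  · intro b _ hb
    rw [if_neg]
    intro hv
    exact hb (Fin.ext (by simp [Fin.last, hv.symm]))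
  · simp

lemma aux_natDeg_le {F : Type} [Field F] (ν : ℕ) (a : Fin (ν+1) → F) :
    (∑ i : Fin (ν+1), Polynomial.C (a i) * Polynomial.X ^ (i:ℕ)).natDegree ≤ ν := by
  apply Polynomial.natDegree_sum_le_of_forall_le
  intro i _
  calc (Polynomial.C (a i) * Polynomial.X ^ (i:ℕ)).natDegree
      ≤ (Polynomial.X ^ (i:ℕ) : Polynomial F).natDegree := Polynomial.natDegree_C_mul_le _ _
    _ = (i:ℕ) := Polynomial.natDegree_X_pow _
    _ ≤ ν := Fin.is_le i

/-- If the top coefficient matrix `H ν` has a zero row, then there is a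
strictly monotone column selection satisfying `colCond` whose minor of the
partial parity-check matrix vanishes. -/
lemma exists_zero_minor (F : Type) [Field F] (n k ν L : ℕ)
    (hk : k < n) (hν : 0 < ν)
    (H : Fin (ν + 1) → Matrix (Fin (n - k)) (Fin n) F)
    (r₀ : Fin (n - k)) (hHν : ∀ c : Fin n, H ⟨ν, by omega⟩ r₀ c = 0) :
    ∃ j : Fin ((L + 1) * (n - k)) → Fin ((ν + L + 1) * n),
      StrictMono j ∧ colCond n k ν L j ∧
        ((ppcm F n k ν L H).submatrix id j).det = 0 := by
  have hm0 : 0 < n - k := by omega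
  have hn0 : 0 < n := by omega
  have hjb : ∀ l : ℕ, l < (L + 1) * (n - k) →
      (if l < n - k then l else (ν + l / (n - k)) * n + l % (n - k)) < (ν + L + 1) * n := by
    intro l hl
    by_cases h : l < n - k
    · rw [if_pos h]
      calc l < n := by omega
        _ ≤ (ν + L + 1) * n := Nat.le_mul_of_pos_left n (by omega)
    · rw [if_neg h]
      have hq : l / (n - k) ≤ L := by
        have := (Nat.div_lt_iff_lt_mul hm0).2 (by omega : l < (L + 1) * (n - k))
        omega
      have ht : l % (n - k) < n - k := Nat.mod_lt l hm0
      calc (ν + l / (n - k)) * n + l % (n - k) < (ν + l / (n - k)) * n + n := by omega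
        _ = (ν + l / (n - k) + 1) * n := by ring
        _ ≤ (ν + L + 1) * n := Nat.mul_le_mul_right n (by omega)
  refine ⟨fun l => ⟨if (l : ℕ) < n - k then (l : ℕ)
      else (ν + (l : ℕ) / (n - k)) * n + (l : ℕ) % (n - k), hjb l l.2⟩, ?_, ?_, ?_⟩
  · -- StrictMono
    intro a b hab
    rw [Fin.lt_def]
    have hab' : (a : ℕ) < (b : ℕ) := hab
    simp only
    by_cases ha : (a : ℕ) < n - k
    · by_cases hb : (b : ℕ) < n - k
      · rw [if_pos ha, if_pos hb]; exact hab'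
      · rw [if_pos ha, if_neg hb]
        have h1 : 1 ≤ (b : ℕ) / (n - k) := Nat.one_le_div_iff hm0 |>.2 (by omega)
        calc (a : ℕ) < n := by omega
          _ ≤ (ν + (b : ℕ) / (n - k)) * n := Nat.le_mul_of_pos_left n (by omega)
          _ ≤ (ν + (b : ℕ) / (n - k)) * n + (b : ℕ) % (n - k) := Nat.le_add_right _ _
    · have hb : ¬ (b : ℕ) < n - k := by omega
      rw [if_neg ha, if_neg hb]
      have hdle : (a : ℕ) / (n - k) ≤ (b : ℕ) / (n - k) := Nat.div_le_div_right (le_of_lt hab')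
      have hta : (a : ℕ) % (n - k) < n - k := Nat.mod_lt _ hm0
      rcases Nat.lt_or_ge ((a : ℕ) / (n - k)) ((b : ℕ) / (n - k)) with hlt | hge
      · calc (ν + (a : ℕ) / (n - k)) * n + (a : ℕ) % (n - k)
            < (ν + (a : ℕ) / (n - k)) * n + n := by omega
          _ = (ν + (a : ℕ) / (n - k) + 1) * n := by ring
          _ ≤ (ν + (b : ℕ) / (n - k)) * n := Nat.mul_le_mul_right n (by omega)
          _ ≤ (ν + (b : ℕ) / (n - k)) * n + (b : ℕ) % (n - k) := Nat.le_add_right _ _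
      · have heq : (a : ℕ) / (n - k) = (b : ℕ) / (n - k) := le_antisymm hdle hge
        have hamod : (a : ℕ) % (n - k) < (b : ℕ) % (n - k) := by
          have hea : (a : ℕ) = (n - k) * ((b : ℕ) / (n - k)) + (a : ℕ) % (n - k) := by
            conv_lhs => rw [← Nat.div_add_mod (a : ℕ) (n - k)]
            rw [heq]
          have heb : (b : ℕ) = (n - k) * ((b : ℕ) / (n - k)) + (b : ℕ) % (n - k) :=
            (Nat.div_add_mod _ _).symm
          omega
        rw [heq]
        exact Nat.add_lt_add_left hamod _
  · -- colCond
    intro l s hs1 hsL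
    simp only
    constructor
    · intro hl
      have hlm : ¬ (l : ℕ) < n - k := by
        have : n - k ≤ (n - k) * s := Nat.le_mul_of_pos_right (n - k) (by omega)
        omega
      rw [if_neg hlm]
      have hdiv : (l : ℕ) / (n - k) = s := by
        rw [hl, Nat.mul_div_cancel_left s hm0]
      have hmod : (l : ℕ) % (n - k) = 0 := by rw [hl, Nat.mul_mod_right]
      rw [hdiv, hmod]
      calc s * n ≤ (ν + s) * n := Nat.mul_le_mul_right n (by omega)
        _ ≤ (ν + s) * n + 0 := by omega
    · intro hl
      by_cases hlm : (l : ℕ) < n - k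
      · rw [if_pos hlm]
        calc (l : ℕ) < n := by omega
          _ ≤ s * n := Nat.le_mul_of_pos_left n (by omega)
          _ ≤ s * n + ν * n := Nat.le_add_right _ _
      · rw [if_neg hlm]
        obtain ⟨q, rfl⟩ : ∃ q, s = q + 1 := ⟨s - 1, by omega⟩
        have hle : (l : ℕ) = (n - k) * q + (n - k - 1) := by
          have h2 : (n - k) * (q + 1) = (n - k) * q + (n - k) := by ring
          omega
        have hdiv : (l : ℕ) / (n - k) = q := by
          rw [hle, Nat.mul_add_div hm0, Nat.div_eq_of_lt (by omega)]
          omega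
        have hmod : (l : ℕ) % (n - k) = n - k - 1 := by
          rw [hle, Nat.mul_add_mod, Nat.mod_eq_of_lt (by omega)]
        rw [hdiv, hmod]
        have he1 : (q + 1) * n + ν * n = (ν + q) * n + n := by ring
        omega
  · -- zero row gives zero determinant
    have hr0lt : (r₀ : ℕ) < (L + 1) * (n - k) :=
      lt_of_lt_of_le r₀.2 (Nat.le_mul_of_pos_left (n - k) (by omega))
    apply Matrix.det_eq_zero_of_row_eq_zero ⟨(r₀ : ℕ), hr0lt⟩
    intro l
    rw [Matrix.submatrix_apply, id]
    have hrm : (r₀ : ℕ) % (n - k) = (r₀ : ℕ) := Nat.mod_eq_of_lt r₀.2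
    have hrd : (r₀ : ℕ) / (n - k) = 0 := Nat.div_eq_of_lt r₀.2
    by_cases hlm : (l : ℕ) < n - k
    · -- column in block 0 : the entry lies in the zero row of `H ν`
      have hcn : (l : ℕ) < n := by omega
      have hcm : (l : ℕ) % n = (l : ℕ) := Nat.mod_eq_of_lt hcn
      have hcd : (l : ℕ) / n = 0 := Nat.div_eq_of_lt hcn
      rw [ppcm]
      simp only [if_pos hlm]
      rw [dif_pos (by rw [hrm, hrd, hcm, hcd]; exact ⟨r₀.2, hcn, le_refl 0, by omega⟩)]
      convert hHν ⟨(l : ℕ) % n, by omega⟩ using 2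
      · exact Fin.ext (by simp only [hcd, hrd]; omega)
      · exact Fin.ext hrm
    · -- column in a block beyond `ν` : the entry is structurally zero
      have hq1 : 1 ≤ (l : ℕ) / (n - k) := Nat.one_le_div_iff hm0 |>.2 (by omega)
      have hcd : ((ν + (l : ℕ) / (n - k)) * n + (l : ℕ) % (n - k)) / n
          = ν + (l : ℕ) / (n - k) := by
        rw [mul_comm, Nat.mul_add_div hn0,
          Nat.div_eq_of_lt (lt_of_lt_of_le (Nat.mod_lt (l : ℕ) hm0) (Nat.sub_le n k))]
        omega
      rw [ppcm]
      simp only [if_neg hlm]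
      rw [dif_neg]
      intro hcc
      have h4 := hcc.2.2.2
      rw [hrd, hcd] at h4
      omega

/-- For an `(n, k, δ)` complete MDP convolutional code, `n - k` divides `δ`.
Here the code is given by a row proper parity-check matrix
`H(z) = H_0 + ⋯ + H_ν z^ν`, so that `δ` is the sum of the row degrees of `H`;
`L = ⌊δ/(n-k)⌋ + ⌊δ/k⌋`, and complete MDP means that every not-trivially-zero
full-size minor of the partial parity-check matrix `𝔥` is nonzero. -/
theorem complete_MDP_sub_dvd_degree (F : Type) [Field F]
    (n k δ ν : ℕ) (hk : k < n) (hk0 : 0 < k) (hδ : 0 < δ)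
    (H : Fin (ν + 1) → Matrix (Fin (n - k)) (Fin n) F)
    (hδeq : δ = ∑ r : Fin (n - k), rowDeg F n k ν H r)
    (hminor : ∀ j : Fin ((δ / (n - k) + δ / k + 1) * (n - k)) →
        Fin ((ν + (δ / (n - k) + δ / k) + 1) * n),
      StrictMono j → colCond n k ν (δ / (n - k) + δ / k) j →
        ((ppcm F n k ν (δ / (n - k) + δ / k) H).submatrix id j).det ≠ 0) :
    (n - k) ∣ δ := by
  by_contra hdvd
  have hm0 : 0 < n - k := by omega
  -- some row has degree `< ν`
  have hex : ∃ r₀ : Fin (n - k), rowDeg F n k ν H r₀ < ν := by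
    by_contra hc
    push_neg at hc
    have hall : ∀ r : Fin (n - k), rowDeg F n k ν H r = ν := by
      intro r
      refine le_antisymm ?_ (hc r)
      unfold rowDeg
      exact Finset.sup_le fun c _ => aux_natDeg_le ν fun i => H i r c
    apply hdvd
    refine ⟨ν, ?_⟩
    rw [hδeq]
    simp [hall, Finset.sum_const, Finset.card_univ]
  obtain ⟨r₀, hr₀⟩ := hex
  have hν : 0 < ν := lt_of_le_of_lt (Nat.zero_le _) hr₀
  have hHν : ∀ c : Fin n, H ⟨ν, by omega⟩ r₀ c = 0 := by
    intro c
    have h1 : (∑ i : Fin (ν+1), Polynomial.C (H i r₀ c) * Polynomial.X ^ (i:ℕ)).natDegree < ν := by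
      unfold rowDeg at hr₀
      exact lt_of_le_of_lt
        (Finset.le_sup (f := fun c : Fin n =>
          (∑ i : Fin (ν+1), Polynomial.C (H i r₀ c) * Polynomial.X ^ (i:ℕ)).natDegree)
          (Finset.mem_univ c)) hr₀
    have h2 := Polynomial.coeff_eq_zero_of_natDegree_lt h1
    rwa [aux_coeff_top ν (fun i => H i r₀ c)] at h2
  obtain ⟨j, hmono, hcond, hdet⟩ :=
    exists_zero_minor F n k ν (δ / (n - k) + δ / k) hk hν H r₀ hHν
  exact hminor j hmono hcond hdet
end

section
/- Let n, k, ν, L ∈ ℕ with k < n. With a = (ν+L+1)n, b = νn+k, and X the a×a lower bidiagonal 1-matrix over ℤ, let 𝔥 be the submatrix of X^b formed by the rows with indices in I = ⋃_{j=0}^{L} {(ν+j)n+k+1, …, (ν+j+1)n}. Write I = {i_1 < ⋯ < i_{(n−k)(L+1)}}. Then for column indices j_1 < ⋯ < j_{(n−k)(L+1)} in {1,…,a}, the conditions (j_{(n−k)s+1} > sn and j_{(n−k)s} ≤ sn + νn for all s = 1,…,L) hold if and only if j_l ∈ {i_l − (νn+k), …, i_l} for all l = 1,…,(n−k)(L+1).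 -/
lemma mono_gap {A Nc : ℕ} {j : Fin A → Fin Nc} (hj : StrictMono j) :
    ∀ d : ℕ, ∀ a b : Fin A, (b : ℕ) = (a : ℕ) + d → (j a : ℕ) + d ≤ (j b : ℕ) := by
  intro d
  induction d with
  | zero =>
    intro a b h
    have : a = b := Fin.ext (by omega)
    simp [this]
  | succ d ih =>
    intro a b h
    have hb' : (a : ℕ) + d < A := by have := b.isLt; omega
    have h1 := ih a ⟨(a : ℕ) + d, hb'⟩ rfl
    have h2 : j ⟨(a : ℕ) + d, hb'⟩ < j b := hj (by simp [Fin.lt_def]; omega)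
    have h3 := Fin.lt_def.mp h2
    simp only [Fin.val_fin_lt] at h3 ⊢
    omega

/-- With `a = (ν+L+1)n` and the row index set
`I = ⋃_{x=0}^{L} {(ν+x)n+k+1, …, (ν+x+1)n}`, whose `l`-th element (1-based) is
`i_l = l + kx + νn + k` where `x = ⌊(l-1)/(n-k)⌋` (0-based:
`i_l = l + k⌊l/(n-k)⌋ + νn + k`), the index conditions
`j_{(n-k)s+1} > sn` and `j_{(n-k)s} ≤ sn + νn` for `s = 1,…,L` hold if and only
if `j_l ∈ {i_l - (νn+k), …, i_l}` for all `l = 1,…,(n-k)(L+1)`. -/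
theorem colCond_iff_interval (n k ν L : ℕ) (hk : k < n)
    (j : Fin ((n - k) * (L + 1)) → Fin ((ν + L + 1) * n)) (hj : StrictMono j) :
    colCond n k ν L j ↔
      ∀ l : Fin ((n - k) * (L + 1)),
        (l : ℕ) + k * ((l : ℕ) / (n - k)) ≤ (j l : ℕ) ∧
        (j l : ℕ) ≤ (l : ℕ) + k * ((l : ℕ) / (n - k)) + ν * n + k := by
  have hm : 0 < n - k := by omega
  have hmk : (n - k) + k = n := by omega
  constructor
  · intro hc l
    have hl : (n - k) * ((l : ℕ) / (n - k)) + (l : ℕ) % (n - k) = (l : ℕ) :=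
      Nat.div_add_mod _ _
    have hr0 : (l : ℕ) % (n - k) < n - k := Nat.mod_lt _ hm
    generalize hxg : (l : ℕ) / (n - k) = x at hl ⊢
    generalize hrg : (l : ℕ) % (n - k) = r at hl hr0
    have hA := l.isLt
    have hxL : x ≤ L := by
      by_contra hcon
      push_neg at hcon
      have h1 : (n - k) * (L + 1) ≤ (n - k) * x := Nat.mul_le_mul_left _ hcon
      omega
    constructor
    · -- lower bound
      rcases Nat.eq_zero_or_pos x with hx0 | hx1
      · have h0 : (0 : ℕ) < (n - k) * (L + 1) := by omega
        have := mono_gap hj (l : ℕ) ⟨0, h0⟩ l (by simp)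
        subst hx0
        omega
      · have hpA : (n - k) * x < (n - k) * (L + 1) := by omega
        have hcp := (hc ⟨(n - k) * x, hpA⟩ x hx1 hxL).1 rfl
        have hgap := mono_gap hj r ⟨(n - k) * x, hpA⟩ l (by simp; omega)
        have e1 : x * n = (n - k) * x + k * x := by
          conv_lhs => rw [← hmk]
          ring
        omega
    · -- upper bound
      rcases Nat.lt_or_ge x L with hxlt | hxge
      · obtain ⟨d, hd⟩ : ∃ d, r + d + 1 = n - k := ⟨n - k - r - 1, by omega⟩
        have e2 : (n - k) * (x + 1) = (n - k) * x + (n - k) := by ring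
        have e3 : (n - k) * (x + 1) ≤ (n - k) * (L + 1) :=
          Nat.mul_le_mul_left _ (by omega)
        have hqA : (l : ℕ) + d < (n - k) * (L + 1) := by omega
        have hq1 : ((l : ℕ) + d) + 1 = (n - k) * (x + 1) := by omega
        have hcq := (hc ⟨(l : ℕ) + d, hqA⟩ (x + 1) (by omega) (by omega)).2 hq1
        have hgap := mono_gap hj d l ⟨(l : ℕ) + d, hqA⟩ rfl
        have e1 : (x + 1) * n = (n - k) * x + k * x + (n - k) + k := by
          conv_lhs => rw [← hmk]
          ring
        omega
      · have hxL' : x = L := le_antisymm hxL hxge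
        subst hxL'
        obtain ⟨d, hd⟩ : ∃ d, r + d + 1 = n - k := ⟨n - k - r - 1, by omega⟩
        have e2 : (n - k) * (x + 1) = (n - k) * x + (n - k) := by ring
        have hlast : (l : ℕ) + d < (n - k) * (x + 1) := by omega
        have hgap := mono_gap hj d l ⟨(l : ℕ) + d, hlast⟩ rfl
        have hNc : ((j ⟨(l : ℕ) + d, hlast⟩ : ℕ)) < (ν + x + 1) * n :=
          (j _).isLt
        have e1 : (ν + x + 1) * n = ν * (n - k) + ν * k + (n - k) * x + k * x + (n - k) + k := by
          conv_lhs => rw [← hmk]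
          ring
        have e4 : ν * n = ν * (n - k) + ν * k := by
          conv_lhs => rw [← hmk]
          ring
        omega
  · intro H l s hs1 hsL
    constructor
    · intro he
      have hdiv : (l : ℕ) / (n - k) = s := by
        rw [he, Nat.mul_div_cancel_left _ hm]
      have h1 := (H l).1
      rw [hdiv, he] at h1
      have e1 : s * n = (n - k) * s + k * s := by
        conv_lhs => rw [← hmk]
        ring
      omega
    · intro he
      obtain ⟨t, rfl⟩ : ∃ t, s = t + 1 := ⟨s - 1, by omega⟩
      have e2 : (n - k) * (t + 1) = (n - k) * t + (n - k) := by ring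
      have hlv : (l : ℕ) = (n - k) * t + ((n - k) - 1) := by omega
      have hdiv : (l : ℕ) / (n - k) = t := by
        rw [hlv, Nat.mul_add_div hm, Nat.div_eq_of_lt (by omega)]
        omega
      have h2 := (H l).2
      rw [hdiv, hlv] at h2
      have e1 : (t + 1) * n = (n - k) * t + k * t + (n - k) + k := by
        conv_lhs => rw [← hmk]
        ring
      omega
end

section
/- Let n, k, ν, L ∈ ℕ with k < n, set a = (ν+L+1)n and b = νn+k, and let X ∈ ℤ^{a×a} be the lower bidiagonal matrix of 1's. Let 𝔥 be the submatrix of X^b given by the rows with indices in I = ⋃_{j=0}^{L} {(ν+j)n+k+1, …, (ν+j+1)n}. Then every full-size minor of 𝔥 formed by columns j_1 < ⋯ < j_{(n−k)(L+1)} satisfying j_{(n−k)s+1} > sn and j_{(n−k)s} ≤ sn + νn for s = 1,…,L is a strictly positive integer. -/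
/-- The `l`-th element (0-based) of the row index set
`I = ⋃_{x=0}^{L} {(ν+x)n+k+1, …, (ν+x+1)n}` (1-based values), viewed as a
0-based index into `{0, …, (ν+L+1)n - 1}`: `i_l = l + k⌊l/(n-k)⌋ + νn + k`. -/
def rowIdx (n k ν L : ℕ) (hk : k < n) (l : Fin ((n - k) * (L + 1))) :
    Fin ((ν + L + 1) * n) :=
  ⟨(l : ℕ) + k * ((l : ℕ) / (n - k)) + ν * n + k, by
    have h1 : (l : ℕ) < (n - k) * (L + 1) := l.isLt
    have h2 : (l : ℕ) / (n - k) < L + 1 := Nat.div_lt_of_lt_mul h1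
    have h3 : k * ((l : ℕ) / (n - k)) ≤ k * L :=
      Nat.mul_le_mul_left k (Nat.lt_succ_iff.mp h2)
    have h5 : k * (L + 1) = k * L + k := by ring
    have h4 : (n - k) * (L + 1) + (k * L + k) = n * (L + 1) := by
      rw [← h5, ← Nat.add_mul]
      congr 1
      omega
    have h6 : (ν + L + 1) * n = ν * n + n * (L + 1) := by ring
    linarith⟩

/-- Elementary bidiagonal factor: identity plus a single `1` at `(t+1, t)`. -/
def Emat (a t : ℕ) : Matrix (Fin a) (Fin a) ℤ :=
  fun i j => if (i : ℕ) = (j : ℕ) ∨ ((i : ℕ) = t + 1 ∧ (j : ℕ) = t) then 1 else 0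

/-- Partial product of the elementary factors `Emat a 0 * ⋯ * Emat a (t-1)`. -/
def Pmat (a t : ℕ) : Matrix (Fin a) (Fin a) ℤ :=
  fun i j => if (i : ℕ) = (j : ℕ) ∨ ((i : ℕ) = (j : ℕ) + 1 ∧ (j : ℕ) < t) then 1 else 0

/-- Total nonnegativity (for minors with strictly monotone row/column choices). -/
def TNN {a : ℕ} (M : Matrix (Fin a) (Fin a) ℤ) : Prop :=
  ∀ (r : ℕ) (i j : Fin r → Fin a), StrictMono i → StrictMono j →
    0 ≤ (M.submatrix i j).det


lemma Pmat_zero {a : ℕ} : Pmat a 0 = 1 := by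
  ext i j; simp [Pmat, Matrix.one_apply, Fin.ext_iff]

lemma Pmat_top {a : ℕ} : Pmat a a = Xmat a := by
  ext i j
  unfold Pmat Xmat
  have hja := j.isLt
  have hiff : ((i:ℕ) = (j:ℕ) ∨ ((i:ℕ) = (j:ℕ) + 1 ∧ (j:ℕ) < a)) ↔
      ((i:ℕ) = (j:ℕ) ∨ (i:ℕ) = (j:ℕ) + 1) := by
    constructor <;> intro h <;> omega
  rw [if_congr hiff rfl rfl]

lemma Emat_eq_one {a t : ℕ} (ht : a ≤ t + 1) : Emat a t = 1 := by
  ext i j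
  have hi := i.isLt
  simp only [Emat, Matrix.one_apply, Fin.ext_iff]
  have hiff : ((i:ℕ) = (j:ℕ) ∨ ((i:ℕ) = t + 1 ∧ (j:ℕ) = t)) ↔ ((i:ℕ) = (j:ℕ)) := by
    constructor <;> intro h <;> omega
  rw [if_congr hiff rfl rfl]

lemma mulE_apply {a : ℕ} (M : Matrix (Fin a) (Fin a) ℤ) {t : ℕ} (ht : t + 1 < a) (x c : Fin a) :
    (M * Emat a t) x c = M x c + if (c : ℕ) = t then M x ⟨t+1, ht⟩ else 0 := by
  rw [Matrix.mul_apply]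
  have key : ∀ y : Fin a, M x y * Emat a t y c =
      (if y = c then M x c else 0) +
      (if y = (⟨t+1, ht⟩ : Fin a) then (if (c : ℕ) = t then M x ⟨t+1, ht⟩ else 0) else 0) := by
    intro y
    rcases eq_or_ne y c with rfl | h1
    · have hyc : ¬ ((y:ℕ) = t + 1 ∧ (y:ℕ) = t) := by omega
      rcases eq_or_ne y (⟨t+1, ht⟩ : Fin a) with rfl | h2
      · simp_all [Emat, Fin.ext_iff]
      · simp_all [Emat, Fin.ext_iff]
    · rcases eq_or_ne y (⟨t+1, ht⟩ : Fin a) with rfl | h2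
      · have h1' : ((⟨t+1, ht⟩ : Fin a) : ℕ) ≠ (c:ℕ) := fun h => h1 (Fin.ext h)
        simp_all [Emat, Fin.ext_iff]
      · have h1' : (y:ℕ) ≠ (c:ℕ) := fun h => h1 (Fin.ext h)
        have h2' : (y:ℕ) ≠ t + 1 := fun h => h2 (Fin.ext h)
        simp_all [Emat, Fin.ext_iff]
  simp_rw [key, Finset.sum_add_distrib, Finset.sum_ite_eq' Finset.univ,
    Finset.mem_univ, if_true]

-- assume t1 contents prepended later; for speed re-declare minimal:
lemma Pmat_succ {a : ℕ} (t : ℕ) : Pmat a (t + 1) = Pmat a t * Emat a t := by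
  by_cases ht : t + 1 < a
  · ext x c
    rw [mulE_apply (Pmat a t) ht]
    unfold Pmat
    by_cases hc : (c : ℕ) = t
    · rw [if_pos hc]
      have h1 : ((x:ℕ) = (c:ℕ) ∨ ((x:ℕ) = (c:ℕ) + 1 ∧ (c:ℕ) < t + 1)) ↔
          ((x:ℕ) = (c:ℕ) ∨ (x:ℕ) = t + 1) := by constructor <;> intro h <;> omega
      have h2 : ((x:ℕ) = (c:ℕ) ∨ ((x:ℕ) = (c:ℕ) + 1 ∧ (c:ℕ) < t)) ↔ ((x:ℕ) = (c:ℕ)) := by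
        constructor <;> intro h <;> omega
      have h3 : ((x:ℕ) = ((⟨t+1,ht⟩ : Fin a):ℕ) ∨
          ((x:ℕ) = ((⟨t+1,ht⟩ : Fin a):ℕ) + 1 ∧ ((⟨t+1,ht⟩ : Fin a):ℕ) < t)) ↔
          ((x:ℕ) = t + 1) := by simp only [Fin.val_mk]; constructor <;> intro h <;> omega
      rw [if_congr h1 rfl rfl, if_congr h2 rfl rfl, if_congr h3 rfl rfl]
      by_cases hx1 : (x:ℕ) = (c:ℕ) <;> by_cases hx2 : (x:ℕ) = t + 1 <;>
        simp_all <;> omega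
    · rw [if_neg hc, add_zero]
      have h1 : ((x:ℕ) = (c:ℕ) ∨ ((x:ℕ) = (c:ℕ) + 1 ∧ (c:ℕ) < t + 1)) ↔
          ((x:ℕ) = (c:ℕ) ∨ ((x:ℕ) = (c:ℕ) + 1 ∧ (c:ℕ) < t)) := by
        constructor <;> intro h <;> omega
      rw [if_congr h1 rfl rfl]
  · rw [Emat_eq_one (by omega), mul_one]
    ext x c
    have hca := c.isLt
    unfold Pmat
    have h1 : ((x:ℕ) = (c:ℕ) ∨ ((x:ℕ) = (c:ℕ) + 1 ∧ (c:ℕ) < t + 1)) ↔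
        ((x:ℕ) = (c:ℕ) ∨ ((x:ℕ) = (c:ℕ) + 1 ∧ (c:ℕ) < t)) := by
      have hxa := x.isLt
      constructor <;> intro h <;> omega
    rw [if_congr h1 rfl rfl]

lemma mulE_submatrix_eq {a r : ℕ} (M : Matrix (Fin a) (Fin a) ℤ) {t : ℕ}
    (i j : Fin r → Fin a) (hjt : ∀ m, (j m : ℕ) ≠ t) :
    (M * Emat a t).submatrix i j = M.submatrix i j := by
  by_cases ht : t + 1 < a
  · ext l c
    simp only [Matrix.submatrix_apply, mulE_apply M ht, if_neg (hjt c), add_zero]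
  · rw [Emat_eq_one (by omega), mul_one]

lemma det_mulE_submatrix {a r : ℕ} (M : Matrix (Fin a) (Fin a) ℤ) {t : ℕ} (ht : t + 1 < a)
    (i j : Fin r → Fin a) (m : Fin r) (hm : (j m : ℕ) = t) (hinj : Function.Injective j) :
    ((M * Emat a t).submatrix i j).det
      = (M.submatrix i j).det + (M.submatrix i (Function.update j m ⟨t+1, ht⟩)).det := by
  have h1 : (M * Emat a t).submatrix i j =
      (M.submatrix i j).updateCol m (fun l => M (i l) (j m) + M (i l) ⟨t+1, ht⟩) := by
    ext l c
    rw [Matrix.updateCol_apply]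
    by_cases hc : c = m
    · subst hc
      simp only [Matrix.submatrix_apply, mulE_apply M ht, hm, if_pos rfl, if_pos]
    · rw [if_neg hc]
      have : (j c : ℕ) ≠ t := by
        intro h; exact hc (hinj (Fin.ext (h.trans hm.symm)))
      simp only [Matrix.submatrix_apply, mulE_apply M ht, if_neg this, add_zero]
  have h2 : (fun l => M (i l) (j m) + M (i l) ⟨t+1, ht⟩)
      = (fun l => M (i l) (j m)) + (fun l => M (i l) (⟨t+1, ht⟩ : Fin a)) := rfl
  rw [h1, h2, Matrix.det_updateCol_add]
  congr 1
  · congr 1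
    ext l c
    rw [Matrix.updateCol_apply]
    split_ifs with hc
    · subst hc; rfl
    · rfl
  · congr 1
    ext l c
    rw [Matrix.updateCol_apply]
    by_cases hc : c = m
    · subst hc; simp [Function.update_self]
    · simp [Function.update_of_ne hc, if_neg hc]

lemma update_strictMono {a r t : ℕ} {j : Fin r → Fin a} (hj : StrictMono j) (m : Fin r)
    (hm : (j m : ℕ) = t) (ht : t + 1 < a)
    (hq : ∀ q, m < q → (j q : ℕ) ≠ t + 1) :
    StrictMono (Function.update j m ⟨t+1, ht⟩) := by
  intro p q hpq
  rcases eq_or_ne p m with rfl | hp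
  · rw [Function.update_self, Function.update_of_ne (ne_of_gt hpq)]
    have h1 : t < (j q : ℕ) := hm ▸ hj hpq
    have h2 := hq q hpq
    rw [Fin.lt_def]
    simp only [Fin.val_mk]
    omega
  · rcases eq_or_ne q m with rfl | hqm
    · rw [Function.update_of_ne hp, Function.update_self]
      have h1 : (j p : ℕ) < t := hm ▸ hj hpq
      rw [Fin.lt_def]
      simp only [Fin.val_mk]
      omega
    · rw [Function.update_of_ne hp, Function.update_of_ne hqm]
      exact hj hpq

lemma det_update_dup {a r : ℕ} (M : Matrix (Fin a) (Fin a) ℤ) {t : ℕ} (ht : t + 1 < a)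
    (i j : Fin r → Fin a) (m q : Fin r) (hmq : m ≠ q) (hqv : (j q : ℕ) = t + 1) :
    (M.submatrix i (Function.update j m ⟨t+1, ht⟩)).det = 0 := by
  apply Matrix.det_zero_of_column_eq hmq
  intro l
  rw [Matrix.submatrix_apply, Matrix.submatrix_apply, Function.update_self,
    Function.update_of_ne hmq.symm]
  congr 1
  exact Fin.ext (by simp [hqv])

lemma submatrix_one_det_nonneg {a r : ℕ} (i j : Fin r → Fin a)
    (hi : StrictMono i) (hj : StrictMono j) :
    0 ≤ ((1 : Matrix (Fin a) (Fin a) ℤ).submatrix i j).det := by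
  by_cases hA : ∀ l, i l ∈ Set.range j
  · by_cases hB : ∀ l, j l ∈ Set.range i
    · have hr : Set.range i = Set.range j :=
        Set.Subset.antisymm (Set.range_subset_iff.mpr hA) (Set.range_subset_iff.mpr hB)
      haveI hwf : WellFoundedLT (Fin r) := inferInstance
      have : i = j := (@StrictMono.range_inj (Fin r) (Fin a) _ _ hwf i j hi hj).mp hr
      subst this
      have h1 : (1 : Matrix (Fin a) (Fin a) ℤ).submatrix i i = 1 := by
        ext x y
        simp [Matrix.one_apply, hi.injective.eq_iff]
      rw [h1, Matrix.det_one]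
      norm_num
    · push_neg at hB
      obtain ⟨l', hl'⟩ := hB
      have : ((1 : Matrix (Fin a) (Fin a) ℤ).submatrix i j).det = 0 := by
        apply Matrix.det_eq_zero_of_column_eq_zero l'
        intro x
        rw [Matrix.submatrix_apply, Matrix.one_apply, if_neg]
        intro h
        exact hl' ⟨x, h⟩
      rw [this]
  · push_neg at hA
    obtain ⟨l, hl⟩ := hA
    have : ((1 : Matrix (Fin a) (Fin a) ℤ).submatrix i j).det = 0 := by
      apply Matrix.det_eq_zero_of_row_eq_zero l
      intro y
      rw [Matrix.submatrix_apply, Matrix.one_apply, if_neg]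
      intro h
      exact hl ⟨y, h.symm⟩
    rw [this]

lemma TNN_mulE {a : ℕ} {M : Matrix (Fin a) (Fin a) ℤ} (hM : TNN M) (t : ℕ) :
    TNN (M * Emat a t) := by
  intro r i j hi hj
  by_cases ht : t + 1 < a
  · by_cases hx : ∃ m, (j m : ℕ) = t
    · obtain ⟨m, hm⟩ := hx
      rw [det_mulE_submatrix M ht i j m hm hj.injective]
      have h1 : 0 ≤ (M.submatrix i j).det := hM r i j hi hj
      by_cases hq : ∀ q, m < q → (j q : ℕ) ≠ t + 1
      · have h2 := hM r i _ hi (update_strictMono hj m hm ht hq)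
        linarith
      · push_neg at hq
        obtain ⟨q, hmq, hqv⟩ := hq
        rw [det_update_dup M ht i j m q (ne_of_lt hmq) hqv]
        linarith
    · push_neg at hx
      rw [mulE_submatrix_eq M i j hx]
      exact hM r i j hi hj
  · rw [Emat_eq_one (by omega), mul_one]
    exact hM r i j hi hj

lemma TNN_mulP {a : ℕ} {M : Matrix (Fin a) (Fin a) ℤ} (hM : TNN M) (t : ℕ) :
    TNN (M * Pmat a t) := by
  induction t with
  | zero => rw [Pmat_zero, mul_one]; exact hM
  | succ t ih => rw [Pmat_succ, ← mul_assoc]; exact TNN_mulE ih t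

lemma det_le_mulP {a : ℕ} {M : Matrix (Fin a) (Fin a) ℤ} (hM : TNN M) :
    ∀ (t r : ℕ) (i j K : Fin r → Fin a), StrictMono i → StrictMono j → StrictMono K →
    (∀ m, (K m : ℕ) = (j m : ℕ) ∨ ((K m : ℕ) = (j m : ℕ) + 1 ∧ (j m : ℕ) < t)) →
    (M.submatrix i K).det ≤ ((M * Pmat a t).submatrix i j).det := by
  intro t
  induction t with
  | zero =>
    intro r i j K hi hj hK hb
    have hKj : K = j := funext fun m => Fin.ext (by rcases hb m with h | ⟨h1, h2⟩; exact h; omega)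
    subst hKj
    rw [Pmat_zero, mul_one]
  | succ t ih =>
    intro r i j K hi hj hK hb
    rw [Pmat_succ, ← mul_assoc]
    have hM' : TNN (M * Pmat a t) := TNN_mulP hM t
    set M' := M * Pmat a t with hM'def
    by_cases ht : t + 1 < a
    · by_cases hx : ∃ m, (j m : ℕ) = t
      · obtain ⟨m, hm⟩ := hx
        rw [det_mulE_submatrix M' ht i j m hm hj.injective]
        by_cases hbm : (K m : ℕ) = t + 1
        · -- bump at m
          have hq : ∀ q, m < q → (j q : ℕ) ≠ t + 1 := by
            intro q hmq hqv
            rcases hb q with h | ⟨h1, h2⟩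
            · have := hK hmq
              rw [Fin.lt_def] at this
              omega
            · omega
          have hsm := update_strictMono hj m hm ht hq
          have hb' : ∀ m', (K m' : ℕ) = ((Function.update j m ⟨t+1, ht⟩) m' : ℕ) ∨
              ((K m' : ℕ) = ((Function.update j m ⟨t+1, ht⟩) m' : ℕ) + 1 ∧
                ((Function.update j m ⟨t+1, ht⟩) m' : ℕ) < t) := by
            intro m'
            rcases eq_or_ne m' m with rfl | h
            · left
              rw [Function.update_self]
              exact hbm
            · rw [Function.update_of_ne h]
              rcases hb m' with h' | ⟨h1, h2⟩
              · left; exact h'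
              · right
                refine ⟨h1, ?_⟩
                have : (j m' : ℕ) ≠ t := fun hc => h (hj.injective (Fin.ext (hc.trans hm.symm)))
                omega
          have h2 := ih r i _ K hi hsm hK hb'
          have h1 : 0 ≤ (M'.submatrix i j).det := hM' r i j hi hj
          linarith
        · -- no bump at m
          have hb' : ∀ m', (K m' : ℕ) = (j m' : ℕ) ∨
              ((K m' : ℕ) = (j m' : ℕ) + 1 ∧ (j m' : ℕ) < t) := by
            intro m'
            rcases hb m' with h' | ⟨h1, h2⟩
            · left; exact h'
            · right
              refine ⟨h1, ?_⟩
              have : (j m' : ℕ) ≠ t := by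
                intro hc
                have : m' = m := hj.injective (Fin.ext (hc.trans hm.symm))
                subst this
                omega
              omega
          have h1 := ih r i j K hi hj hK hb'
          have h2 : 0 ≤ (M'.submatrix i (Function.update j m ⟨t+1, ht⟩)).det := by
            by_cases hq : ∀ q, m < q → (j q : ℕ) ≠ t + 1
            · exact hM' r i _ hi (update_strictMono hj m hm ht hq)
            · push_neg at hq
              obtain ⟨q, hmq, hqv⟩ := hq
              rw [det_update_dup M' ht i j m q (ne_of_lt hmq) hqv]
          linarith
      · push_neg at hx
        rw [mulE_submatrix_eq M' i j hx]
        apply ih r i j K hi hj hK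
        intro m'
        rcases hb m' with h' | ⟨h1, h2⟩
        · left; exact h'
        · right
          have := hx m'
          exact ⟨h1, by omega⟩
    · rw [Emat_eq_one (by omega), mul_one]
      apply ih r i j K hi hj hK
      intro m'
      rcases hb m' with h' | ⟨h1, h2⟩
      · left; exact h'
      · right
        refine ⟨h1, ?_⟩
        have := (K m').isLt
        omega

lemma TNN_Xpow {a b : ℕ} : TNN (Xmat a ^ b) := by
  induction b with
  | zero =>
    rw [pow_zero]
    intro r i j hi hj
    exact submatrix_one_det_nonneg i j hi hj
  | succ b ih =>
    have h : Xmat a ^ (b + 1) = Xmat a ^ b * Pmat a a := by rw [Pmat_top, pow_succ]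
    rw [h]
    exact TNN_mulP ih a

lemma det_pos_Xpow {a : ℕ} (b : ℕ) :
    ∀ (r : ℕ) (i j : Fin r → Fin a), StrictMono i → StrictMono j →
    (∀ l, (j l : ℕ) ≤ (i l : ℕ) ∧ (i l : ℕ) ≤ (j l : ℕ) + b) →
    0 < ((Xmat a ^ b).submatrix i j).det := by
  induction b with
  | zero =>
    intro r i j hi hj hc
    have hji : j = i := funext fun l => Fin.ext (by have := hc l; omega)
    subst hji
    rw [pow_zero]
    have h1 : (1 : Matrix (Fin a) (Fin a) ℤ).submatrix j j = 1 := by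
      ext x y
      simp [Matrix.one_apply, hj.injective.eq_iff]
    rw [h1, Matrix.det_one]
    norm_num
  | succ b ih =>
    intro r i j hi hj hc
    have hKlt : ∀ l : Fin r, max (j l : ℕ) ((i l : ℕ) - b) < a := fun l => by
      have h1 := (i l).isLt
      have h2 := (j l).isLt
      omega
    set K : Fin r → Fin a := fun l => ⟨max (j l : ℕ) ((i l : ℕ) - b), hKlt l⟩ with hKdef
    have hK : StrictMono K := by
      intro p q hpq
      have h1 := hj hpq
      have h2 := hi hpq
      rw [Fin.lt_def] at h1 h2 ⊢
      simp only [hKdef]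
      omega
    have hps : Xmat a ^ (b + 1) = Xmat a ^ b * Pmat a a := by rw [Pmat_top, pow_succ]
    rw [hps]
    have hmain := det_le_mulP (TNN_Xpow (a := a) (b := b)) a r i j K hi hj hK (fun m => by
      have := hc m
      have := (K m).isLt
      simp only [hKdef]
      omega)
    have hpos := ih r i K hi hK (fun l => by
      have := hc l
      simp only [hKdef]
      constructor <;> omega)
    linarith

lemma strictMono_gap {r a : ℕ} {j : Fin r → Fin a} (hj : StrictMono j) :
    ∀ (d p : ℕ) (h : p + d < r) (h' : p < r),
      (j ⟨p, h'⟩ : ℕ) + d ≤ (j ⟨p + d, h⟩ : ℕ) := by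
  intro d
  induction d with
  | zero => intro p h h'; simp
  | succ d ih =>
    intro p h h'
    have h1 : p + d < r := by omega
    have h2 := ih p h1 h'
    have h3 : (⟨p + d, h1⟩ : Fin r) < ⟨p + d + 1, by omega⟩ := by
      rw [Fin.lt_def]; simp
    have h4 := hj h3
    rw [Fin.lt_def] at h4
    have h5 : (j ⟨p + (d + 1), h⟩ : ℕ) = (j ⟨p + d + 1, by omega⟩ : ℕ) := rfl
    omega

/-- Every full-size minor of the submatrix `𝔥` of `X^b` (with
`a = (ν+L+1)n`, `b = νn+k`, rows given by the index set `I`) formed by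
columns `j₁ < ⋯ < j_{(n-k)(L+1)}` satisfying the index conditions
`j_{(n-k)s+1} > sn` and `j_{(n-k)s} ≤ sn + νn` for `s = 1,…,L` is a
strictly positive integer. -/
theorem minor_pos_of_colCond (n k ν L : ℕ) (hk : k < n)
    (j : Fin ((n - k) * (L + 1)) → Fin ((ν + L + 1) * n)) (hj : StrictMono j)
    (hcond : colCond n k ν L j) :
    0 < ((Xmat ((ν + L + 1) * n) ^ (ν * n + k)).submatrix
          (rowIdx n k ν L hk) j).det := by
  have hmk : (n - k) + k = n := by omega
  have hm1 : 1 ≤ n - k := by omega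
  refine det_pos_Xpow (ν * n + k) _ (rowIdx n k ν L hk) j ?_ hj ?_
  · -- StrictMono rowIdx
    intro p q hpq
    have hpq' : (p : ℕ) < (q : ℕ) := hpq
    have hdle : (p : ℕ) / (n - k) ≤ (q : ℕ) / (n - k) := Nat.div_le_div_right (c := n - k) (le_of_lt hpq')
    have hkle : k * ((p : ℕ) / (n - k)) ≤ k * ((q : ℕ) / (n - k)) := Nat.mul_le_mul_left _ hdle
    show ((rowIdx n k ν L hk p : Fin ((ν + L + 1) * n)) : ℕ) < (rowIdx n k ν L hk q : Fin ((ν + L + 1) * n))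
    show (p : ℕ) + k * ((p : ℕ) / (n - k)) + ν * n + k < (q : ℕ) + k * ((q : ℕ) / (n - k)) + ν * n + k
    linarith
  · -- bounds
    intro l
    obtain ⟨s, t, hst, ht, hsl, hsL⟩ :
        ∃ s t, (n - k) * s + t = (l : ℕ) ∧ t < n - k ∧ (l : ℕ) / (n - k) = s ∧ s < L + 1 :=
      ⟨(l : ℕ) / (n - k), (l : ℕ) % (n - k), Nat.div_add_mod (l : ℕ) (n - k),
        Nat.mod_lt _ (by omega), rfl, Nat.div_lt_of_lt_mul l.isLt⟩
    have e3 : (n - k) * s + k * s = s * n := by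
      rw [← Nat.add_mul, hmk, Nat.mul_comm]
    have hil : ((rowIdx n k ν L hk l : Fin ((ν + L + 1) * n)) : ℕ)
        = (n - k) * s + t + k * s + ν * n + k := by
      show (l : ℕ) + k * ((l : ℕ) / (n - k)) + ν * n + k = _
      rw [hsl, ← hst]
    -- lower bound on j l
    have hlow : (n - k) * s + t + k * s ≤ (j l : ℕ) := by
      rcases Nat.eq_zero_or_pos s with hs0 | hs1
      · have h0 : (0 : ℕ) < (n - k) * (L + 1) := lt_of_le_of_lt (Nat.zero_le _) l.isLt
        have hgap := strictMono_gap hj (l : ℕ) 0 (by simpa using l.isLt) h0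
        have : (⟨0 + (l : ℕ), by simpa using l.isLt⟩ : Fin ((n - k) * (L + 1))) = l :=
          Fin.ext (by simp)
        rw [this] at hgap
        have : (l : ℕ) ≤ (j l : ℕ) := le_trans (by omega) hgap
        rw [hs0] at hst ⊢
        simp only [Nat.mul_zero] at hst ⊢
        omega
      · have hple : (n - k) * s ≤ (l : ℕ) := by omega
        have hplt : (n - k) * s < (n - k) * (L + 1) := lt_of_le_of_lt hple l.isLt
        have hlt2 : (n - k) * s + t < (n - k) * (L + 1) := by rw [hst]; exact l.isLt
        have hc1 : s * n ≤ (j ⟨(n - k) * s, hplt⟩ : ℕ) :=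
          (hcond ⟨(n - k) * s, hplt⟩ s hs1 (by omega)).1 rfl
        have hgap := strictMono_gap hj t ((n - k) * s) hlt2 hplt
        have hidx : (⟨(n - k) * s + t, hlt2⟩ : Fin ((n - k) * (L + 1))) = l := Fin.ext hst
        rw [hidx] at hgap
        linarith
    -- upper bound on j l
    have hup : (j l : ℕ) ≤ (n - k) * s + t + k * s + ν * n + k := by
      obtain ⟨d, hd⟩ : ∃ d, t + 1 + d = n - k := ⟨n - k - (t + 1), by omega⟩
      have e4 : (n - k) * (s + 1) = (n - k) * s + (n - k) := Nat.mul_succ _ _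
      have hsum : (l : ℕ) + d + 1 = (n - k) * (s + 1) := by
        rw [← hst, e4, ← hd]; ring
      rcases Nat.lt_or_ge s L with hsL' | hsL''
      · have hlt3 : (l : ℕ) + d < (n - k) * (L + 1) := by
          have : (n - k) * (s + 1) ≤ (n - k) * (L + 1) := Nat.mul_le_mul_left _ (by omega)
          omega
        have hc2 : (j ⟨(l : ℕ) + d, hlt3⟩ : ℕ) < (s + 1) * n + ν * n :=
          (hcond ⟨(l : ℕ) + d, hlt3⟩ (s + 1) (by omega) (by omega)).2 hsum
        have hgap := strictMono_gap hj d (l : ℕ) hlt3 l.isLt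
        have hidx : (⟨(l : ℕ), l.isLt⟩ : Fin ((n - k) * (L + 1))) = l := Fin.ext rfl
        rw [hidx] at hgap
        have e5 : (s + 1) * n = s * n + n := Nat.succ_mul _ _
        have : (j l : ℕ) + d + 1 ≤ s * n + n + ν * n := by linarith
        have hnk : t + 1 + d = n - k := hd
        -- j l ≤ s*n + νn + k + t
        have : (j l : ℕ) ≤ s * n + ν * n + k + t := by omega
        linarith
      · -- s = L
        have hsL2 : s = L := by omega
        have hlt3 : (l : ℕ) + d < (n - k) * (L + 1) := by
          rw [hsL2] at hsum; omega
        have hgap := strictMono_gap hj d (l : ℕ) hlt3 l.isLt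
        have hidx : (⟨(l : ℕ), l.isLt⟩ : Fin ((n - k) * (L + 1))) = l := Fin.ext rfl
        rw [hidx] at hgap
        have hja : (j ⟨(l : ℕ) + d, hlt3⟩ : ℕ) < (ν + L + 1) * n := (j _).isLt
        have e7 : (ν + L + 1) * n = ν * n + L * n + n := by ring
        have : (j l : ℕ) + d + 1 ≤ ν * n + L * n + n := by linarith
        have hfin : (j l : ℕ) ≤ ν * n + L * n + t + k := by omega
        rw [hsL2] at e3 ⊢
        linarith
    rw [hil]
    constructor
    · linarith
    · linarith
end

section
/- Let n, k, ν, L ∈ ℕ with k < n, a = (ν+L+1)n, b = νn+k, and let 𝔥 be the submatrix of X^b (X the a×a lower bidiagonal 1-matrix over ℤ) given by the rows in I = ⋃_{j=0}^{L} {(ν+j)n+k+1, …, (ν+j+1)n}. If p is a prime with p > C(νn+k, ⌊(νn+k)/2⌋)^{(n−k)(L+1)} · ((n−k)(L+1))^{(n−k)(L+1)/2}, then every full-size minor of 𝔥 whose column indices satisfy j_{(n−k)s+1} > sn and j_{(n−k)s} ≤ sn + νn for s = 1,…,L is nonzero modulo p. -/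
open Matrix Finset

variable {A : ℕ}

lemma StrictMono.apply_add_sub_le {f : Fin A → ℕ} (hf : StrictMono f) {a c : Fin A}
    (hac : a ≤ c) : f a + ((c : ℕ) - a) ≤ f c := by
  obtain ⟨d, hd⟩ := Nat.exists_eq_add_of_le (Fin.le_def.mp hac)
  induction d generalizing c with
  | zero => rw [show c = a from Fin.ext (by omega)]; omega
  | succ d ih =>
    have hc' : (a : ℕ) + d < A := by omega
    have hle := ih (c := ⟨a + d, hc'⟩) (Fin.le_def.mpr (by simp)) rfl
    have hlt := hf (show (⟨a + d, hc'⟩ : Fin A) < c from Fin.lt_def.mpr (by simp only; omega))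
    simp only at hle
    omega

lemma intCast_zmod_ne_zero_of_pos_of_lt {p : ℕ} {d : ℤ} (h0 : 0 < d) (hp : d < p) :
    (d : ZMod p) ≠ 0 := by
  rw [Ne, ZMod.intCast_zmod_eq_zero_iff_dvd]
  exact fun h => (Int.le_of_dvd h0 h).not_gt hp

def xpowEntry (b i j : ℕ) : ℤ := if j ≤ i then (b.choose (i - j) : ℤ) else 0

lemma xpowEntry_nonneg (b i j : ℕ) : 0 ≤ xpowEntry b i j := by
  unfold xpowEntry; split <;> positivity

lemma xpowEntry_le_centralBinom (b i j : ℕ) : xpowEntry b i j ≤ b.choose (b / 2) := by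
  unfold xpowEntry
  split
  · exact_mod_cast Nat.choose_le_middle _ _
  · positivity

lemma xpowEntry_zero (i j : ℕ) : xpowEntry 0 i j = if i = j then 1 else 0 := by
  unfold xpowEntry
  by_cases h : j ≤ i
  · rcases h.eq_or_lt with rfl | hlt
    · simp
    · simp [h, hlt.ne', Nat.choose_eq_zero_of_lt (Nat.sub_pos_of_lt hlt)]
  · simp [h, show i ≠ j by omega]

lemma xpowEntry_succ (b i j : ℕ) :
    xpowEntry (b + 1) i j = xpowEntry b i j + xpowEntry b i (j + 1) := by
  unfold xpowEntry
  rcases lt_trichotomy i j with h | rfl | h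
  · simp [show ¬j ≤ i by omega, show ¬j + 1 ≤ i by omega]
  · simp
  · rw [if_pos h.le, if_pos h.le, if_pos (Nat.succ_le_of_lt h),
      show i - j = i - (j + 1) + 1 by omega, Nat.choose_succ_succ']
    push_cast; ring

lemma Xmat_pow_apply (N b : ℕ) (i j : Fin N) : (Xmat N ^ b) i j = xpowEntry b i j := by
  induction b generalizing j with
  | zero => simp [xpowEntry_zero, one_apply, Fin.ext_iff]
  | succ b ih =>
    have hX : ∀ t : Fin N, Xmat N t j =
        (if (t : ℕ) = j then 1 else 0) + (if (t : ℕ) = j + 1 then 1 else 0) := by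
      intro t; unfold Xmat; split_ifs <;> omega
    -- the column `j + 1` is absent when `j + 1 = N`, but then `xpowEntry b i (j + 1) = 0`
    have hlast : ¬(j : ℕ) + 1 < N → xpowEntry b i (j + 1) = 0 := fun h => by
      unfold xpowEntry; rw [if_neg (by omega)]
    simp only [pow_succ, mul_apply, ih, hX, mul_add, mul_ite, mul_one, mul_zero,
      sum_add_distrib, xpowEntry_succ]
    rw [Fin.sum_univ_eq_sum_range (fun t => if t = (j : ℕ) then xpowEntry b i t else 0),
      Fin.sum_univ_eq_sum_range (fun t => if t = (j : ℕ) + 1 then xpowEntry b i t else 0),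
      sum_ite_eq', sum_ite_eq']
    simp only [mem_range, j.isLt, if_true]
    split_ifs with h
    · rfl
    · rw [hlast h]

/-- Indices live in `ℕ` rather than `Fin N`, so that columns can be shifted past the last
column of `X`, where the entries vanish. -/
def xpowMinor (b : ℕ) (I J : Fin A → ℕ) : Matrix (Fin A) (Fin A) ℤ :=
  Matrix.of fun l m => xpowEntry b (I l) (J m)

lemma submatrix_Xmat_pow {N : ℕ} (b : ℕ) (I J : Fin A → Fin N) :
    (Xmat N ^ b).submatrix I J = xpowMinor b (fun l => I l) (fun l => J l) := by
  ext l m; simp [xpowMinor, Xmat_pow_apply]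

lemma det_xpowMinor_zero {I J : Fin A → ℕ} (hI : StrictMono I) (hJ : StrictMono J) :
    (xpowMinor 0 I J).det = if I = J then 1 else 0 := by
  split_ifs with h
  · subst h
    have : xpowMinor 0 I I = 1 := by
      ext l m; simp [xpowMinor, xpowEntry_zero, one_apply, hI.injective.eq_iff]
    rw [this, det_one]
  · rw [det_apply]
    refine sum_eq_zero fun σ _ => ?_
    -- a nonzero term would give `I ∘ σ = J`, forcing `σ` to be monotone, hence the identity
    suffices ∃ l, I (σ l) ≠ J l by
      obtain ⟨l, hl⟩ := this
      rw [prod_eq_zero (mem_univ l) (by simp [xpowMinor, xpowEntry_zero, hl]), smul_zero]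
    by_contra! hσ
    have hσmono : StrictMono σ := fun a c hac => by
      have := hJ hac
      rwa [← hσ a, ← hσ c, hI.lt_iff_lt] at this
    exact h (funext fun l => by simpa [hσmono.eq_id] using hσ l)

lemma det_xpowMinor_succ (b : ℕ) (I J : Fin A → ℕ) :
    (xpowMinor (b + 1) I J).det =
      ∑ ε : Fin A → Bool, (xpowMinor b I fun l => J l + (ε l).toNat).det := by
  have hcols : (xpowMinor (b + 1) I J)ᵀ =
      fun m => ∑ t : Bool, fun l => xpowEntry b (I l) (J m + t.toNat) := by
    ext m l; simp [xpowMinor, xpowEntry_succ, add_comm]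
  rw [← det_transpose, det, hcols]
  refine (detRowAlternating.toMultilinearMap.map_sum _).trans (sum_congr rfl fun ε _ => ?_)
  rw [← det_transpose]
  rfl

lemma monotone_add_toNat {J : Fin A → ℕ} (hJ : StrictMono J) (ε : Fin A → Bool) :
    Monotone fun l => J l + (ε l).toNat := by
  intro a c hac
  rcases hac.eq_or_lt with rfl | hlt
  · rfl
  · have := hJ hlt
    have := Bool.toNat_le (ε a)
    show J a + _ ≤ J c + _
    omega

lemma strictMono_or_det_xpowMinor_eq_zero (b : ℕ) (I : Fin A → ℕ) {J : Fin A → ℕ}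
    (hJ : Monotone J) : StrictMono J ∨ (xpowMinor b I J).det = 0 := by
  rw [hJ.strictMono_iff_injective, or_iff_not_imp_left, Function.not_injective_iff]
  rintro ⟨a, c, hac, hne⟩
  exact det_zero_of_column_eq hne fun l => by simp [xpowMinor, hac]

variable {I : Fin A → ℕ}

lemma det_xpowMinor_nonneg (hI : StrictMono I) (b : ℕ) {J : Fin A → ℕ} (hJ : Monotone J) :
    0 ≤ (xpowMinor b I J).det := by
  induction b generalizing J with
  | zero =>
    obtain hJs | h0 := strictMono_or_det_xpowMinor_eq_zero 0 I hJ
    · rw [det_xpowMinor_zero hI hJs]; split <;> norm_num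
    · exact h0.ge
  | succ b ih =>
    obtain hJs | h0 := strictMono_or_det_xpowMinor_eq_zero (b + 1) I hJ
    swap; · exact h0.ge
    rw [det_xpowMinor_succ]
    exact sum_nonneg fun ε _ => ih (monotone_add_toNat hJs ε)

lemma det_xpowMinor_le_prod (hI : StrictMono I) (b : ℕ) {J : Fin A → ℕ} (hJ : Monotone J) :
    (xpowMinor b I J).det ≤ ∏ l, xpowEntry b (I l) (J l) := by
  have hprod : ∀ b' (J' : Fin A → ℕ), 0 ≤ ∏ l, xpowEntry b' (I l) (J' l) := fun b' J' =>
    prod_nonneg fun l _ => xpowEntry_nonneg _ _ _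
  induction b generalizing J with
  | zero =>
    obtain hJs | h0 := strictMono_or_det_xpowMinor_eq_zero 0 I hJ
    · rw [det_xpowMinor_zero hI hJs]
      split_ifs with h
      · simp [h, xpowEntry_zero]
      · exact hprod 0 J
    · exact h0 ▸ hprod 0 J
  | succ b ih =>
    obtain hJs | h0 := strictMono_or_det_xpowMinor_eq_zero (b + 1) I hJ
    swap; · exact h0 ▸ hprod (b + 1) J
    calc (xpowMinor (b + 1) I J).det
        = ∑ ε : Fin A → Bool, (xpowMinor b I fun l => J l + (ε l).toNat).det :=
          det_xpowMinor_succ b I J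
      _ ≤ ∑ ε : Fin A → Bool, ∏ l, xpowEntry b (I l) (J l + (ε l).toNat) :=
          sum_le_sum fun ε _ => ih (monotone_add_toNat hJs ε)
      _ = ∏ l, ∑ t : Bool, xpowEntry b (I l) (J l + t.toNat) :=
          (Fintype.prod_sum fun l (t : Bool) => xpowEntry b (I l) (J l + t.toNat)).symm
      _ = ∏ l, xpowEntry (b + 1) (I l) (J l) := by simp [xpowEntry_succ, add_comm]

lemma det_xpowMinor_le_centralBinom_pow (hI : StrictMono I) (b : ℕ) {J : Fin A → ℕ}
    (hJ : Monotone J) : (xpowMinor b I J).det ≤ (b.choose (b / 2) : ℤ) ^ A :=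
  calc (xpowMinor b I J).det ≤ ∏ l, xpowEntry b (I l) (J l) := det_xpowMinor_le_prod hI b hJ
    _ ≤ ∏ _l : Fin A, (b.choose (b / 2) : ℤ) :=
        prod_le_prod (fun l _ => xpowEntry_nonneg _ _ _)
          fun l _ => xpowEntry_le_centralBinom _ _ _
    _ = (b.choose (b / 2) : ℤ) ^ A := by simp

/-- `hband` says that all diagonal entries of the minor are nonzero. -/
lemma one_le_det_xpowMinor (hI : StrictMono I) (b : ℕ) {J : Fin A → ℕ} (hJ : StrictMono J)
    (hband : ∀ l, J l ≤ I l ∧ I l ≤ J l + b) : 1 ≤ (xpowMinor b I J).det := by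
  induction b generalizing J with
  | zero =>
    have hIJ : I = J := funext fun l => by have := hband l; omega
    rw [det_xpowMinor_zero hI hJ, if_pos hIJ]
  | succ b ih =>
    -- shift exactly the columns that lie too far from their row for `X ^ b`
    set ε : Fin A → Bool := fun l => decide (J l + b < I l)
    have hε : ∀ l, (ε l).toNat = if J l + b < I l then 1 else 0 := fun l => by
      split_ifs with h <;> simp [ε, h]
    have hJ' : StrictMono fun l => J l + (ε l).toNat := fun a c hac => by
      have := hJ hac; have := hI hac; have := hband a; have := hband c
      simp only [hε]
      split_ifs <;> omega
    have hband' : ∀ l, J l + (ε l).toNat ≤ I l ∧ I l ≤ J l + (ε l).toNat + b := by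
      intro l
      have := hband l
      rw [hε]
      split_ifs <;> omega
    calc 1 ≤ (xpowMinor b I fun l => J l + (ε l).toNat).det := ih hJ' hband'
      _ ≤ ∑ ε : Fin A → Bool, (xpowMinor b I fun l => J l + (ε l).toNat).det :=
          single_le_sum (fun ε _ => det_xpowMinor_nonneg hI b (monotone_add_toNat hJ ε))
            (mem_univ ε)
      _ = (xpowMinor (b + 1) I J).det := (det_xpowMinor_succ b I J).symm

section Band

variable {n k ν L : ℕ} (hk : k < n) {j : Fin ((n - k) * (L + 1)) → Fin ((ν + L + 1) * n)}

lemma rowIdx_strictMono : StrictMono fun l => (rowIdx n k ν L hk l : ℕ) := fun a c hac => by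
  have := Nat.mul_le_mul_left k (Nat.div_le_div_right (c := n - k) hac.le)
  simp only [rowIdx]
  omega

/-- Row `l` lies in block `q = l / (n - k)`, where `rowIdx l = q * n + l % (n - k) + ν * n + k`;
the lower index condition of that block bounds the columns from below. -/
lemma rowIdx_le (hj : StrictMono j) (hcond : colCond n k ν L j) (l : Fin ((n - k) * (L + 1))) :
    (rowIdx n k ν L hk l : ℕ) ≤ j l + (ν * n + k) := by
  set q := (l : ℕ) / (n - k)
  have hdiv : (n - k) * q + l % (n - k) = l := Nat.div_add_mod _ _
  have hqL : q ≤ L := Nat.lt_succ_iff.mp (Nat.div_lt_of_lt_mul l.isLt)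
  have hblock : (n - k) * q + k * q = q * n := by
    rw [← add_mul, Nat.sub_add_cancel hk.le, mul_comm]
  obtain ⟨e, he⟩ : ∃ e : Fin ((n - k) * (L + 1)), (e : ℕ) = (n - k) * q :=
    ⟨⟨(n - k) * q, by omega⟩, rfl⟩
  have hje : q * n ≤ j e := by
    rcases Nat.eq_zero_or_pos q with hq | hq
    · simp [hq]
    · exact (hcond e q hq hqL).1 he
  have hgap := (Fin.val_strictMono.comp hj).apply_add_sub_le (a := e) (c := l)
    (Fin.le_def.mpr (by omega))
  have hrow : (rowIdx n k ν L hk l : ℕ) = l + k * q + ν * n + k := rfl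
  simp only [Function.comp_apply] at hgap
  omega

/-- Dually, the upper index condition of block `q` (or, in the last block, the size of `X`)
bounds the column of the last row of the block. -/
lemma le_rowIdx (hj : StrictMono j) (hcond : colCond n k ν L j) (l : Fin ((n - k) * (L + 1))) :
    (j l : ℕ) ≤ rowIdx n k ν L hk l := by
  set q := (l : ℕ) / (n - k)
  have hdiv : (n - k) * q + l % (n - k) = l := Nat.div_add_mod _ _
  have hmod := Nat.mod_lt (l : ℕ) (Nat.sub_pos_of_lt hk)
  have hqL : q ≤ L := Nat.lt_succ_iff.mp (Nat.div_lt_of_lt_mul l.isLt)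
  have hblock : (n - k) * q + k * q = q * n := by
    rw [← add_mul, Nat.sub_add_cancel hk.le, mul_comm]
  have hq1 : (n - k) * (q + 1) = (n - k) * q + (n - k) := by ring
  have hqL' : (n - k) * (q + 1) ≤ (n - k) * (L + 1) := Nat.mul_le_mul_left _ (by omega)
  obtain ⟨e, he⟩ : ∃ e : Fin ((n - k) * (L + 1)), (e : ℕ) + 1 = (n - k) * (q + 1) :=
    ⟨⟨(n - k) * (q + 1) - 1, by omega⟩, by simp only; omega⟩
  have hje : (j e : ℕ) < ν * n + q * n + n := by
    rcases hqL.eq_or_lt with hq | hq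
    · have : (ν + L + 1) * n = ν * n + q * n + n := by rw [hq]; ring
      have := (j e).isLt
      omega
    · have := (hcond e (q + 1) (Nat.le_add_left 1 q) hq).2 he
      linarith [show (q + 1) * n = q * n + n by ring]
  have hgap := (Fin.val_strictMono.comp hj).apply_add_sub_le (a := l) (c := e)
    (Fin.le_def.mpr (by omega))
  have hrow : (rowIdx n k ν L hk l : ℕ) = l + k * q + ν * n + k := rfl
  simp only [Function.comp_apply] at hgap
  omega

end Band

theorem minor_ne_zero_mod_p_general (n k ν L : ℕ) (hk : k < n)
    (p : ℕ)
    (hpbig : ((Nat.choose (ν * n + k) ((ν * n + k) / 2) : ℝ)) ^ ((n - k) * (L + 1)) *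
        (((n - k) * (L + 1) : ℕ) : ℝ) ^ ((((n - k) * (L + 1) : ℕ) : ℝ) / 2) < (p : ℝ))
    (j : Fin ((n - k) * (L + 1)) → Fin ((ν + L + 1) * n)) (hj : StrictMono j)
    (hcond : colCond n k ν L j) :
    ((((Xmat ((ν + L + 1) * n) ^ (ν * n + k)).submatrix
          (rowIdx n k ν L hk) j).det : ℤ) : ZMod p) ≠ 0 := by
  have hI := rowIdx_strictMono (ν := ν) (L := L) hk
  have hJ : StrictMono fun l => (j l : ℕ) := Fin.val_strictMono.comp hj
  have hA : 0 < (n - k) * (L + 1) := Nat.mul_pos (Nat.sub_pos_of_lt hk) L.succ_pos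
  have hlt : (Nat.choose (ν * n + k) ((ν * n + k) / 2) : ℝ) ^ ((n - k) * (L + 1)) < p :=
    (le_mul_of_one_le_right (by positivity)
      (Real.one_le_rpow (by exact_mod_cast hA) (by positivity))).trans_lt hpbig
  rw [submatrix_Xmat_pow]
  refine intCast_zmod_ne_zero_of_pos_of_lt (one_le_det_xpowMinor hI _ hJ fun l =>
    ⟨le_rowIdx hk hj hcond l, rowIdx_le hk hj hcond l⟩) ?_
  exact (det_xpowMinor_le_centralBinom_pow hI _ hJ.monotone).trans_lt (by exact_mod_cast hlt)

/-- If `p` is a prime with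
`p > C(νn+k, ⌊(νn+k)/2⌋)^{(n-k)(L+1)} ((n-k)(L+1))^{(n-k)(L+1)/2}`, then every
full-size minor of the submatrix `𝔥` of `X^b` (rows given by `I`) whose
column indices satisfy the index conditions is nonzero modulo `p`. -/
theorem minor_ne_zero_mod_p (n k ν L : ℕ) (hk : k < n)
    (p : ℕ) (hp : p.Prime)
    (hpbig : ((Nat.choose (ν * n + k) ((ν * n + k) / 2) : ℝ)) ^ ((n - k) * (L + 1)) *
        (((n - k) * (L + 1) : ℕ) : ℝ) ^ ((((n - k) * (L + 1) : ℕ) : ℝ) / 2) < (p : ℝ))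
    (j : Fin ((n - k) * (L + 1)) → Fin ((ν + L + 1) * n)) (hj : StrictMono j)
    (hcond : colCond n k ν L j) :
    ((((Xmat ((ν + L + 1) * n) ^ (ν * n + k)).submatrix
          (rowIdx n k ν L hk) j).det : ℤ) : ZMod p) ≠ 0 :=
  minor_ne_zero_mod_p_general n k ν L hk p hpbig j hj hcond
end

section
/- Let n, k, ν ∈ ℕ with k < n, L = ν + ⌊ν(n−k)/k⌋, and let M be the (L+1)(n−k) × (ν+L+1)n matrix whose nonzero entries are powers α^{2^m} with m ≤ (ν+2)n−k−2, arranged so that in each row the exponents along any set of A = (L+1)(n−k) nonzero positions chosen with distinct rows and columns are distinct powers of 2 with consecutive ratios at least 2 within rows. Then any nontrivial term of any full-size minor of M is a power α^e with e ≤ (L+1)·(2^{(ν+2)n−k−2} + 2^{(ν+2)n−k−4} + ⋯ + 2^{νn+k}) < (L+1)·2^{(ν+2)n−k−1}. -/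
/-- The partial parity-check matrix of the construction
`H(z) = Σ H_i z^i`, `(H_i)_{r,c} = α^{2^{in + r + c}}` (0-based `r, c`), with
block columns in reverse order: the `s`-th block row (`s = 0,…,L`) is
`[0 … 0 H_0 H_1 … H_ν 0 … 0]`, with `H_0` starting at block column `L - s`. -/
def Mconstr (F : Type) [Field F] (α : F) (n k ν L : ℕ) :
    Matrix (Fin ((L + 1) * (n - k))) (Fin ((ν + L + 1) * n)) F :=
  fun i c =>
    if L - (i : ℕ) / (n - k) ≤ (c : ℕ) / n ∧
        (c : ℕ) / n ≤ (L - (i : ℕ) / (n - k)) + ν then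
      α ^ (2 ^ (((c : ℕ) / n - (L - (i : ℕ) / (n - k))) * n +
            (i : ℕ) % (n - k) + (c : ℕ) % n))
    else 0

/-- The exponent `2^{in + r + c}` of `α` at a nonzero position of `Mconstr`. -/
def Mexp (n k ν L : ℕ) (i : Fin ((L + 1) * (n - k)))
    (c : Fin ((ν + L + 1) * n)) : ℕ :=
  2 ^ (((c : ℕ) / n - (L - (i : ℕ) / (n - k))) * n +
        (i : ℕ) % (n - k) + (c : ℕ) % n)


/-- Sum of `b^e` over a finset of naturals bounded by `D` is at most the sum of the
`card` largest powers. -/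
lemma sum_pow_le_top (b : ℕ) (hb : 2 ≤ b) :
    ∀ (c : ℕ) (S : Finset ℕ) (D : ℕ), S.card = c → (∀ e ∈ S, e ≤ D) →
      ∑ e ∈ S, b ^ e ≤ ∑ t ∈ Finset.range c, b ^ (D - t) := by
  intro c
  induction c with
  | zero =>
    intro S D hcard _
    simp [Finset.card_eq_zero.mp hcard]
  | succ c ih =>
    intro S D hcard hle
    by_cases hD : D ∈ S
    · rw [← Finset.insert_erase hD, Finset.sum_insert (Finset.notMem_erase _ _)]
      have herase : ∀ e ∈ S.erase D, e ≤ D - 1 := by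
        intro e he
        have h1 := hle e (Finset.mem_of_mem_erase he)
        have h2 := Finset.ne_of_mem_erase he
        omega
      have hc : (S.erase D).card = c := by
        rw [Finset.card_erase_of_mem hD, hcard]; omega
      have := ih (S.erase D) (D - 1) hc herase
      rw [Finset.sum_range_succ' (fun t => b ^ (D - t)) c]
      have he : ∀ t, D - (t + 1) = D - 1 - t := by omega
      simp only [Nat.sub_zero]
      calc b ^ D + ∑ e ∈ S.erase D, b ^ e
          ≤ b ^ D + ∑ t ∈ Finset.range c, b ^ (D - 1 - t) := by omega
        _ = (∑ t ∈ Finset.range c, b ^ (D - (t + 1))) + b ^ D := by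
            rw [add_comm]; congr 1; exact Finset.sum_congr rfl fun t _ => by congr 1; omega
    · have hlt : ∀ e ∈ S, e < D := fun e he => lt_of_le_of_ne (hle e he) (fun h => hD (h ▸ he))
      have h1 : ∑ e ∈ S, b ^ e < b ^ D := Nat.geomSum_lt hb hlt
      have h2 : b ^ D ≤ ∑ t ∈ Finset.range (c + 1), b ^ (D - t) := by
        have : b ^ (D - 0) ≤ ∑ t ∈ Finset.range (c + 1), b ^ (D - t) :=
          Finset.single_le_sum (f := fun t => b ^ (D - t)) (fun t _ => Nat.zero_le _)
            (Finset.mem_range.mpr (Nat.succ_pos c))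
        simpa using this
      omega

/-- Per-block bound via Cauchy–Schwarz. -/
lemma block_bound {ι : Type*} (s : Finset ι) (d r : ι → ℕ) (D R : ℕ)
    (hd : Set.InjOn d s) (hr : Set.InjOn r s)
    (hD : ∀ i ∈ s, d i ≤ D) (hR : ∀ i ∈ s, r i ≤ R) :
    ∑ i ∈ s, 2 ^ (d i + r i) ≤ ∑ t ∈ Finset.range s.card, 2 ^ ((D - t) + (R - t)) := by
  rcases Nat.eq_zero_or_pos s.card with hc0 | hc0
  · simp [Finset.card_eq_zero.mp hc0, hc0]
  set c := s.card with hc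
  -- c ≤ D + 1 and c ≤ R + 1
  have hcD : c ≤ D + 1 := by
    have : s.card = (s.image d).card := (Finset.card_image_of_injOn hd).symm
    rw [hc, this]
    have : s.image d ⊆ Finset.range (D + 1) := by
      intro e he
      obtain ⟨i, hi, rfl⟩ := Finset.mem_image.mp he
      exact Finset.mem_range.mpr (Nat.lt_succ_of_le (hD i hi))
    simpa using Finset.card_le_card this
  have hcR : c ≤ R + 1 := by
    have : s.card = (s.image r).card := (Finset.card_image_of_injOn hr).symm
    rw [hc, this]
    have : s.image r ⊆ Finset.range (R + 1) := by
      intro e he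
      obtain ⟨i, hi, rfl⟩ := Finset.mem_image.mp he
      exact Finset.mem_range.mpr (Nat.lt_succ_of_le (hR i hi))
    simpa using Finset.card_le_card this
  -- Cauchy-Schwarz
  have hcs : (∑ i ∈ s, 2 ^ (d i + r i)) ^ 2 ≤
      (∑ i ∈ s, 4 ^ (d i)) * ∑ i ∈ s, 4 ^ (r i) := by
    have := Finset.sum_mul_sq_le_sq_mul_sq s (fun i => (2:ℕ) ^ d i) (fun i => (2:ℕ) ^ r i)
    calc (∑ i ∈ s, 2 ^ (d i + r i)) ^ 2
        = (∑ i ∈ s, 2 ^ d i * 2 ^ r i) ^ 2 := by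
          congr 1; exact Finset.sum_congr rfl fun i _ => pow_add 2 (d i) (r i)
      _ ≤ (∑ i ∈ s, (2 ^ d i) ^ 2) * ∑ i ∈ s, (2 ^ r i) ^ 2 := this
      _ = (∑ i ∈ s, 4 ^ (d i)) * ∑ i ∈ s, 4 ^ (r i) := by
          congr 1 <;> exact Finset.sum_congr rfl fun i _ => by
            rw [← pow_mul, mul_comm, pow_mul]; norm_num
  -- bound each factor
  have hbd : ∑ i ∈ s, 4 ^ (d i) ≤ ∑ t ∈ Finset.range c, 4 ^ (D - t) := by
    rw [← Finset.sum_image (f := fun e => (4:ℕ) ^ e) (g := d) (fun x hx y hy h => hd hx hy h)]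
    exact sum_pow_le_top 4 (by norm_num) c (s.image d) D
      (by rw [Finset.card_image_of_injOn hd])
      (fun e he => by obtain ⟨i, hi, rfl⟩ := Finset.mem_image.mp he; exact hD i hi)
  have hbr : ∑ i ∈ s, 4 ^ (r i) ≤ ∑ t ∈ Finset.range c, 4 ^ (R - t) := by
    rw [← Finset.sum_image (f := fun e => (4:ℕ) ^ e) (g := r) (fun x hx y hy h => hr hx hy h)]
    exact sum_pow_le_top 4 (by norm_num) c (s.image r) R
      (by rw [Finset.card_image_of_injOn hr])
      (fun e he => by obtain ⟨i, hi, rfl⟩ := Finset.mem_image.mp he; exact hR i hi)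
  -- rewrite the three sums via geometric factor
  set G : ℕ := ∑ t ∈ Finset.range c, 4 ^ t with hG
  have hDf : ∑ t ∈ Finset.range c, 4 ^ (D - t) = 4 ^ (D - (c - 1)) * G := by
    rw [hG, Finset.mul_sum, ← Finset.sum_range_reflect (fun t => (4:ℕ) ^ (D - t)) c]
    exact Finset.sum_congr rfl fun t ht => by
      rw [← pow_add]; congr 1; have := Finset.mem_range.mp ht; omega
  have hRf : ∑ t ∈ Finset.range c, 4 ^ (R - t) = 4 ^ (R - (c - 1)) * G := by
    rw [hG, Finset.mul_sum, ← Finset.sum_range_reflect (fun t => (4:ℕ) ^ (R - t)) c]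
    exact Finset.sum_congr rfl fun t ht => by
      rw [← pow_add]; congr 1; have := Finset.mem_range.mp ht; omega
  have hBf : ∑ t ∈ Finset.range c, 2 ^ ((D - t) + (R - t))
      = 2 ^ ((D - (c - 1)) + (R - (c - 1))) * G := by
    rw [hG, Finset.mul_sum,
      ← Finset.sum_range_reflect (fun t => (2:ℕ) ^ ((D - t) + (R - t))) c]
    refine Finset.sum_congr rfl fun t ht => ?_
    have ht' := Finset.mem_range.mp ht
    have h4 : (4:ℕ) ^ t = 2 ^ (2 * t) := by rw [pow_mul]; norm_num
    rw [h4, ← pow_add]; congr 1; omega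
  -- conclude by comparing squares
  have hsq : (∑ i ∈ s, 2 ^ (d i + r i)) ^ 2 ≤
      (∑ t ∈ Finset.range c, 2 ^ ((D - t) + (R - t))) ^ 2 := by
    calc (∑ i ∈ s, 2 ^ (d i + r i)) ^ 2
        ≤ (∑ i ∈ s, 4 ^ (d i)) * ∑ i ∈ s, 4 ^ (r i) := hcs
      _ ≤ (∑ t ∈ Finset.range c, 4 ^ (D - t)) * ∑ t ∈ Finset.range c, 4 ^ (R - t) :=
          Nat.mul_le_mul hbd hbr
      _ = (∑ t ∈ Finset.range c, 2 ^ ((D - t) + (R - t))) ^ 2 := by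
          rw [hDf, hRf, hBf]
          have : (4:ℕ) = 2 ^ 2 := by norm_num
          rw [this, ← pow_mul, ← pow_mul, mul_pow, ← pow_mul]
          rw [show (D - (c - 1) + (R - (c - 1))) * 2
              = 2 * (D - (c - 1)) + 2 * (R - (c - 1)) by ring, pow_add]
          ring
  exact (Nat.pow_le_pow_iff_left (by norm_num : (2:ℕ) ≠ 0)).mp hsq

/-- For `L = ν + ⌊ν(n-k)/k⌋`, any nontrivial term of any full-size minor of
the matrix `M = Mconstr` (a product of nonzero entries, one from each row, in
distinct columns) is a power `α^e` with
`e ≤ (L+1)·(2^{νn+k} + 2^{νn+k+2} + ⋯ + 2^{(ν+2)n-k-2}) < (L+1)·2^{(ν+2)n-k-1}`. -/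
theorem Mconstr_term_exponent_bound (F : Type) [Field F] (α : F)
    (n k ν : ℕ) (hk : k < n) (hk0 : 0 < k) (hν : 0 < ν)
    (j : Fin (((ν + ν * (n - k) / k) + 1) * (n - k)) →
      Fin ((ν + (ν + ν * (n - k) / k) + 1) * n))
    (hj : StrictMono j)
    (σ : Equiv.Perm (Fin (((ν + ν * (n - k) / k) + 1) * (n - k))))
    (hnontriv : ∀ i, Mconstr F α n k ν (ν + ν * (n - k) / k) i (j (σ i)) ≠ 0) :
    (∑ i, Mexp n k ν (ν + ν * (n - k) / k) i (j (σ i))) ≤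
        ((ν + ν * (n - k) / k) + 1) *
          ∑ t ∈ Finset.range (n - k), 2 ^ (ν * n + k + 2 * t) ∧
      ((ν + ν * (n - k) / k) + 1) *
          ∑ t ∈ Finset.range (n - k), 2 ^ (ν * n + k + 2 * t) <
        ((ν + ν * (n - k) / k) + 1) * 2 ^ ((ν + 2) * n - k - 1) := by
  have hn : 0 < n := lt_of_le_of_lt (Nat.zero_le k) hk
  have hm0 : 0 < n - k := by omega
  -- nonzero condition
  have hcond : ∀ i : Fin (((ν + ν * (n - k) / k) + 1) * (n - k)),
      (ν + ν * (n - k) / k) - (i : ℕ) / (n - k) ≤ ((j (σ i)) : ℕ) / n ∧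
        ((j (σ i)) : ℕ) / n ≤ ((ν + ν * (n - k) / k) - (i : ℕ) / (n - k)) + ν := by
    intro i
    by_contra h
    apply hnontriv i
    simp only [Mconstr]
    rw [if_neg h]
  -- per fiber bound
  set K : ℕ := ∑ t ∈ Finset.range (n - k), 2 ^ (ν * n + k + 2 * t) with hKdef
  have hfiber : ∀ s ∈ Finset.range ((ν + ν * (n - k) / k) + 1),
      ∑ i ∈ Finset.univ.filter (fun i : Fin (((ν + ν * (n - k) / k) + 1) * (n - k)) => (i : ℕ) / (n - k) = s),
        Mexp n k ν (ν + ν * (n - k) / k) i (j (σ i)) ≤ K := by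
    intro s _
    set fib := Finset.univ.filter (fun i : Fin (((ν + ν * (n - k) / k) + 1) * (n - k)) => (i : ℕ) / (n - k) = s)
      with hfib
    set d : Fin (((ν + ν * (n - k) / k) + 1) * (n - k)) → ℕ :=
      fun i => (((j (σ i)) : ℕ) / n - ((ν + ν * (n - k) / k) - s)) * n + ((j (σ i)) : ℕ) % n with hd
    set r : Fin (((ν + ν * (n - k) / k) + 1) * (n - k)) → ℕ := fun i => (i : ℕ) % (n - k) with hr
    have hmem : ∀ i ∈ fib, (i : ℕ) / (n - k) = s := by
      intro i hi
      exact (Finset.mem_filter.mp hi).2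
    -- value of column from d
    have hval : ∀ i ∈ fib, ((j (σ i)) : ℕ) = d i + ((ν + ν * (n - k) / k) - s) * n := by
      intro i hi
      have h1 := hcond i
      rw [hmem i hi] at h1
      have h2 : (((j (σ i)) : ℕ) / n - ((ν + ν * (n - k) / k) - s) + ((ν + ν * (n - k) / k) - s)) * n + ((j (σ i)) : ℕ) % n
          = ((j (σ i)) : ℕ) := by
        rw [Nat.sub_add_cancel h1.1, mul_comm]
        exact Nat.div_add_mod _ n
      calc ((j (σ i)) : ℕ) = (((j (σ i)) : ℕ) / n - ((ν + ν * (n - k) / k) - s) + ((ν + ν * (n - k) / k) - s)) * n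
            + ((j (σ i)) : ℕ) % n := h2.symm
        _ = d i + ((ν + ν * (n - k) / k) - s) * n := by rw [hd, add_mul]; ring
    have hdinj : Set.InjOn d fib := by
      intro i hi i' hi' hdd
      have h1 := hval i hi
      have h2 := hval i' hi'
      have : j (σ i) = j (σ i') := Fin.ext (by omega)
      exact σ.injective (hj.injective this)
    have hrinj : Set.InjOn r fib := by
      intro i hi i' hi' hrr
      have h1 := Nat.div_add_mod (i : ℕ) (n - k)
      have h2 := Nat.div_add_mod (i' : ℕ) (n - k)
      have h3 := hmem i hi
      have h4 := hmem i' hi'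
      have h5 : (i : ℕ) % (n - k) = (i' : ℕ) % (n - k) := hrr
      apply Fin.ext
      rw [← h1, ← h2, h3, h4, h5]
    have hDb : ∀ i ∈ fib, d i ≤ ν * n + (n - 1) := by
      intro i hi
      have h1 := hcond i
      rw [hmem i hi] at h1
      have h2 : (((j (σ i)) : ℕ) / n - ((ν + ν * (n - k) / k) - s)) * n ≤ ν * n :=
        Nat.mul_le_mul_right n (by omega)
      have h3 : ((j (σ i)) : ℕ) % n < n := Nat.mod_lt _ hn
      show (((j (σ i)) : ℕ) / n - ((ν + ν * (n - k) / k) - s)) * n + ((j (σ i)) : ℕ) % n ≤ ν * n + (n - 1)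
      exact Nat.add_le_add h2 (by omega)
    have hRb : ∀ i ∈ fib, r i ≤ (n - k) - 1 := by
      intro i _
      have : (i : ℕ) % (n - k) < n - k := Nat.mod_lt _ hm0
      show (i : ℕ) % (n - k) ≤ (n - k) - 1
      omega
    have hcard : fib.card ≤ n - k := by
      have : fib.card ≤ (Finset.range (n - k)).card :=
        Finset.card_le_card_of_injOn r
          (fun i hi => Finset.mem_range.mpr (Nat.mod_lt _ hm0)) hrinj
      simpa using this
    have hterm : ∀ i ∈ fib, Mexp n k ν (ν + ν * (n - k) / k) i (j (σ i)) = 2 ^ (d i + r i) := by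
      intro i hi
      have hs := hmem i hi
      show 2 ^ (((((j (σ i)) : ℕ)) / n - ((ν + ν * (n - k) / k) - (i : ℕ) / (n - k))) * n
            + (i : ℕ) % (n - k) + ((j (σ i)) : ℕ) % n)
          = 2 ^ ((((((j (σ i)) : ℕ)) / n - ((ν + ν * (n - k) / k) - s)) * n + ((j (σ i)) : ℕ) % n)
            + (i : ℕ) % (n - k))
      rw [hs]
      congr 1
      ring
    calc ∑ i ∈ fib, Mexp n k ν (ν + ν * (n - k) / k) i (j (σ i))
        = ∑ i ∈ fib, 2 ^ (d i + r i) := Finset.sum_congr rfl hterm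
      _ ≤ ∑ t ∈ Finset.range fib.card,
            2 ^ ((ν * n + (n - 1) - t) + ((n - k) - 1 - t)) :=
          block_bound fib d r (ν * n + (n - 1)) ((n - k) - 1) hdinj hrinj hDb hRb
      _ ≤ ∑ t ∈ Finset.range (n - k),
            2 ^ ((ν * n + (n - 1) - t) + ((n - k) - 1 - t)) :=
          Finset.sum_le_sum_of_subset (Finset.range_subset_range.mpr hcard)
      _ = K := by
          rw [hKdef,
            ← Finset.sum_range_reflect
              (fun t => 2 ^ ((ν * n + (n - 1) - t) + ((n - k) - 1 - t))) (n - k)]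
          refine Finset.sum_congr rfl fun t ht => ?_
          have ht' := Finset.mem_range.mp ht
          congr 1
          have hP : ∃ P, ν * n = P := ⟨_, rfl⟩
          obtain ⟨P, hPe⟩ := hP
          rw [hPe]
          omega
  have hsplit : (∑ i, Mexp n k ν (ν + ν * (n - k) / k) i (j (σ i)))
      = ∑ s ∈ Finset.range ((ν + ν * (n - k) / k) + 1),
          ∑ i ∈ Finset.univ.filter (fun i : Fin (((ν + ν * (n - k) / k) + 1) * (n - k)) => (i : ℕ) / (n - k) = s),
            Mexp n k ν (ν + ν * (n - k) / k) i (j (σ i)) := by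
    rw [Finset.sum_fiberwise_of_maps_to]
    intro i _
    refine Finset.mem_range.mpr ?_
    have := i.isLt
    exact (Nat.div_lt_iff_lt_mul hm0).mpr (by omega)
  have hpart1 : (∑ i, Mexp n k ν (ν + ν * (n - k) / k) i (j (σ i))) ≤ ((ν + ν * (n - k) / k) + 1) * K := by
    rw [hsplit]
    calc ∑ s ∈ Finset.range ((ν + ν * (n - k) / k) + 1), _ ≤ ∑ s ∈ Finset.range ((ν + ν * (n - k) / k) + 1), K :=
          Finset.sum_le_sum hfiber
      _ = ((ν + ν * (n - k) / k) + 1) * K := by rw [Finset.sum_const, Finset.card_range, smul_eq_mul]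
  have hgeom : 2 * ∑ t ∈ Finset.range (n - k), 4 ^ t < 4 ^ (n - k) := by
    have : ∀ p : ℕ, 0 < p → 2 * ∑ t ∈ Finset.range p, 4 ^ t < 4 ^ p := by
      intro p hp
      induction p with
      | zero => omega
      | succ q ih =>
        rcases Nat.eq_zero_or_pos q with rfl | hq
        · simp
        · have h1 := ih hq
          rw [Finset.sum_range_succ, pow_succ]
          omega
    exact this _ hm0
  have hKeq : K = 2 ^ (ν * n + k) * ∑ t ∈ Finset.range (n - k), 4 ^ t := by
    rw [hKdef, Finset.mul_sum]
    refine Finset.sum_congr rfl fun t _ => ?_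
    rw [pow_add]
    congr 1
    rw [show (4 : ℕ) = 2 ^ 2 by norm_num, ← pow_mul]
  have hpart2 : K < 2 ^ ((ν + 2) * n - k - 1) := by
    have h1 : 2 * K < 2 ^ (ν * n + k) * 4 ^ (n - k) := by
      rw [hKeq, ← mul_assoc, mul_comm 2 (2 ^ (ν * n + k)), mul_assoc]
      exact mul_lt_mul_of_pos_left hgeom (pow_pos (by norm_num) _)
    have h2 : 2 ^ (ν * n + k) * 4 ^ (n - k) = 2 * 2 ^ ((ν + 2) * n - k - 1) := by
      rw [show (4 : ℕ) = 2 ^ 2 by norm_num, ← pow_mul, ← pow_add,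
        show 2 * 2 ^ ((ν + 2) * n - k - 1) = 2 ^ ((ν + 2) * n - k - 1 + 1) by
          rw [pow_succ]; ring]
      congr 1
      have hP : ∃ P, ν * n = P := ⟨_, rfl⟩
      obtain ⟨P, hPe⟩ := hP
      rw [hPe, show (ν + 2) * n = P + 2 * n by rw [← hPe]; ring]
      omega
    omega
  refine ⟨hpart1, ?_⟩
  exact mul_lt_mul_of_pos_left hpart2 (Nat.succ_pos (ν + ν * (n - k) / k))
end
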